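/- arXiv:math/0604257 — 7 statements merged into one kernel-verified Lean document; each statement's English description precedes it below -/
import Mathlib

section
/- Every homeomorphism g of ℝⁿ with compact support can be written as a commutator g = f ∘ h ∘ f⁻¹ ∘ h⁻¹ where f and h are homeomorphisms of ℝⁿ with compact support. -/
open Pointwise Set Topology

noncomputable instance homeoGroup (X : Type*) [TopologicalSpace X] : Group (X ≃ₜ X) where
  mul f g := g.trans f
  one := Homeomorph.refl X
  inv := Homeomorph.symm
  mul_assoc _ _ _ := rfl
  one_mul f := by ext x; rfl
  mul_one f := by ext x; rfl
  inv_mul_cancel f := by ext x; exact f.symm_apply_apply x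

namespace CommutatorProof

noncomputable def psi (t : ℝ) : ℝ := min t (max (t/2) ((5*t-3)/4))
noncomputable def phi (s : ℝ) : ℝ := max s (min (2*s) ((4*s+3)/5))

lemma psi_strictMono : StrictMono psi := by
  intro a b hab; simp only [psi, min_def, max_def]; split_ifs <;> linarith

lemma phi_strictMono : StrictMono phi := by
  intro a b hab; simp only [phi, min_def, max_def]; split_ifs <;> linarith

lemma phi_psi (t : ℝ) : phi (psi t) = t := by
  simp only [psi, phi, min_def, max_def]; split_ifs <;> linarith

lemma psi_phi (s : ℝ) : psi (phi s) = s := phi_strictMono.injective (by rw [phi_psi])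

lemma psi_one : psi 1 = 1/2 := by simp only [psi, min_def, max_def]; norm_num

lemma phi_half : phi (1/2) = 1 := by simp only [phi, min_def, max_def]; norm_num

lemma psi_of_ge {t : ℝ} (h : 3 ≤ t) : psi t = t := by
  rw [psi, max_eq_right (by linarith), min_eq_left (by linarith)]

lemma psi_ge_half {t : ℝ} (h : 1 ≤ t) : 1/2 ≤ psi t := by
  rw [← psi_one]; exact psi_strictMono.monotone h

lemma phi_ge_one {s : ℝ} (h : 1/2 ≤ s) : 1 ≤ phi s := by
  rw [← phi_half]; exact phi_strictMono.monotone h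

lemma psi_continuous : Continuous psi := by
  unfold psi
  exact continuous_id.min ((continuous_id.div_const 2).max (by continuity))

lemma phi_continuous : Continuous phi := by
  unfold phi
  exact continuous_id.max ((by continuity : Continuous fun s : ℝ => 2*s).min (by continuity))

/-! ### The radial homeomorphism `f` -/

variable {E : Type*} [NormedAddCommGroup E] [NormedSpace ℝ E]

noncomputable def sig (t : ℝ) : ℝ := psi (max t 1) / max t 1
noncomputable def tau (s : ℝ) : ℝ := phi (max s (1/2)) / max s (1/2)

lemma sig_of_le {t : ℝ} (h : t ≤ 1) : sig t = 1/2 := by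
  rw [sig, max_eq_right h, psi_one]; norm_num

lemma tau_of_le {s : ℝ} (h : s ≤ 1/2) : tau s = 2 := by
  rw [tau, max_eq_right h, phi_half]; norm_num

lemma sig_continuous : Continuous sig := by
  apply Continuous.div (psi_continuous.comp (continuous_id.max continuous_const))
    (continuous_id.max continuous_const)
  intro t
  have : (1:ℝ) ≤ max t 1 := le_max_right t 1
  positivity

lemma tau_continuous : Continuous tau := by
  apply Continuous.div (phi_continuous.comp (continuous_id.max continuous_const))
    (continuous_id.max continuous_const)
  intro t
  have : (1:ℝ)/2 ≤ max t (1/2) := le_max_right t (1/2)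
  positivity

noncomputable def fmap (x : E) : E := sig ‖x‖ • x
noncomputable def fmapInv (x : E) : E := tau ‖x‖ • x

lemma fmap_of_le {x : E} (h : ‖x‖ ≤ 1) : fmap x = (1/2 : ℝ) • x := by
  rw [fmap, sig_of_le h]

lemma fmapInv_of_le {x : E} (h : ‖x‖ ≤ 1/2) : fmapInv x = (2 : ℝ) • x := by
  rw [fmapInv, tau_of_le h]

lemma norm_fmap_of_ge {x : E} (h : 1 ≤ ‖x‖) : ‖fmap x‖ = psi ‖x‖ := by
  have hx0 : (0:ℝ) < ‖x‖ := lt_of_lt_of_le one_pos h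
  have hψ : (1:ℝ)/2 ≤ psi ‖x‖ := psi_ge_half h
  rw [fmap, sig, max_eq_left h, norm_smul, Real.norm_eq_abs,
    abs_of_pos (by positivity)]
  field_simp

lemma fmapInv_fmap (x : E) : fmapInv (fmap x) = x := by
  rcases le_total ‖x‖ 1 with h | h
  · rw [fmap_of_le h]
    have h2 : ‖(1/2 : ℝ) • x‖ ≤ 1/2 := by
      rw [norm_smul, Real.norm_eq_abs]
      rw [abs_of_pos (by norm_num)]
      nlinarith [norm_nonneg x]
    rw [fmapInv_of_le h2, smul_smul]; norm_num
  · have hx0 : (0:ℝ) < ‖x‖ := lt_of_lt_of_le one_pos h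
    have hψ : (1:ℝ)/2 ≤ psi ‖x‖ := psi_ge_half h
    rw [fmapInv, norm_fmap_of_ge h, tau, max_eq_left hψ, phi_psi, fmap, sig,
      max_eq_left h, smul_smul]
    have : ‖x‖ / psi ‖x‖ * (psi ‖x‖ / ‖x‖) = 1 := by field_simp
    rw [this, one_smul]

lemma norm_fmapInv_of_ge {x : E} (h : 1/2 ≤ ‖x‖) : ‖fmapInv x‖ = phi ‖x‖ := by
  have hx0 : (0:ℝ) < ‖x‖ := lt_of_lt_of_le (by norm_num) h
  have hφ : (1:ℝ) ≤ phi ‖x‖ := phi_ge_one h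
  rw [fmapInv, tau, max_eq_left h, norm_smul, Real.norm_eq_abs,
    abs_of_pos (by positivity)]
  field_simp

lemma fmap_fmapInv (x : E) : fmap (fmapInv x) = x := by
  rcases le_total ‖x‖ (1/2) with h | h
  · rw [fmapInv_of_le h]
    have h2 : ‖(2 : ℝ) • x‖ ≤ 1 := by
      rw [norm_smul, Real.norm_eq_abs, abs_of_pos (by norm_num)]
      linarith
    rw [fmap_of_le h2, smul_smul]; norm_num
  · have hx0 : (0:ℝ) < ‖x‖ := lt_of_lt_of_le (by norm_num) h
    have hφ : (1:ℝ) ≤ phi ‖x‖ := phi_ge_one h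
    rw [fmap, norm_fmapInv_of_ge h, sig, max_eq_left hφ, psi_phi, fmapInv, tau,
      max_eq_left h, smul_smul]
    have : ‖x‖ / phi ‖x‖ * (phi ‖x‖ / ‖x‖) = 1 := by field_simp
    rw [this, one_smul]

lemma fmap_continuous : Continuous (fmap (E := E)) :=
  (sig_continuous.comp continuous_norm).smul continuous_id

lemma fmapInv_continuous : Continuous (fmapInv (E := E)) :=
  (tau_continuous.comp continuous_norm).smul continuous_id

lemma fmap_of_ge {x : E} (h : 3 ≤ ‖x‖) : fmap x = x := by
  have h1 : (1:ℝ) ≤ ‖x‖ := by linarith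
  have hx0 : (0:ℝ) < ‖x‖ := by linarith
  rw [fmap, sig, max_eq_left h1, psi_of_ge h, div_self (ne_of_gt hx0), one_smul]

lemma norm_fmap_ge {x : E} (h : 1 ≤ ‖x‖) : 1/2 ≤ ‖fmap x‖ := by
  rw [norm_fmap_of_ge h]; exact psi_ge_half h

noncomputable def Fhomeo : E ≃ₜ E :=
  ⟨⟨fmap, fmapInv, fmapInv_fmap, fmap_fmapInv⟩, fmap_continuous, fmapInv_continuous⟩

@[simp] lemma Fhomeo_apply (x : E) : Fhomeo x = fmap x := rfl
@[simp] lemma Fhomeo_symm_apply (x : E) : (Fhomeo (E := E)).symm x = fmapInv x := rfl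


/-! ### The shrinking balls and the infinite product map -/

variable (c : E)

def inB (k : ℕ) (x : E) : Prop := ‖(2:ℝ)^k • x - c‖ ≤ 1/16

lemma inB_zero_iff {x : E} : inB c 0 x ↔ ‖x - c‖ ≤ 1/16 := by
  simp [inB]

lemma norm_two_pow_smul (k : ℕ) (y : E) : ‖(2:ℝ)^k • y‖ = 2^k * ‖y‖ := by
  rw [norm_smul, Real.norm_eq_abs, abs_of_pos (by positivity)]

variable {c}

lemma inB_bounds (hc : ‖c‖ = 3/8) {k : ℕ} {x : E} (h : inB c k x) :
    5/16 ≤ 2^k * ‖x‖ ∧ 2^k * ‖x‖ ≤ 7/16 := by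
  have h1 := norm_sub_norm_le ((2:ℝ)^k • x) c
  have h2 := norm_sub_norm_le c ((2:ℝ)^k • x)
  rw [norm_sub_rev] at h2
  rw [norm_two_pow_smul] at h1 h2
  rw [inB] at h
  constructor <;> linarith [hc ▸ h1, hc ▸ h2]

lemma two_pow_big {j k : ℕ} (h : j < k) : 2 * (2:ℝ)^j ≤ 2^k := by
  calc 2 * (2:ℝ)^j = 2^(j+1) := by ring
  _ ≤ 2^k := pow_le_pow_right₀ one_le_two h

lemma inB_unique (hc : ‖c‖ = 3/8) {k j : ℕ} {x : E} (hk : inB c k x) (hj : inB c j x) :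
    k = j := by
  by_contra hne
  obtain ⟨hk1, hk2⟩ := inB_bounds hc hk
  obtain ⟨hj1, hj2⟩ := inB_bounds hc hj
  have hx : (0:ℝ) ≤ ‖x‖ := norm_nonneg x
  rcases lt_or_gt_of_ne hne with h | h
  · have := mul_le_mul_of_nonneg_right (two_pow_big h) hx
    nlinarith
  · have := mul_le_mul_of_nonneg_right (two_pow_big h) hx
    nlinarith

lemma inB_norm_le (hc : ‖c‖ = 3/8) {k : ℕ} {x : E} (h : inB c k x) : ‖x‖ ≤ 7/16 := by
  obtain ⟨_, h2⟩ := inB_bounds hc h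
  have hx : (0:ℝ) ≤ ‖x‖ := norm_nonneg x
  have h1 : (1:ℝ) ≤ 2^k := one_le_pow₀ one_le_two
  nlinarith

lemma inB_zero_norm_ge (hc : ‖c‖ = 3/8) {x : E} (h : inB c 0 x) : 5/16 ≤ ‖x‖ := by
  have := (inB_bounds hc h).1
  simpa using this

variable (c) in
open scoped Classical in
noncomputable def hmap (G : E → E) (x : E) : E :=
  if hk : ∃ k, inB c k x then
    ((2:ℝ)^hk.choose)⁻¹ • G ((2:ℝ)^hk.choose • x)
  else x

lemma hmap_of_inB (hc : ‖c‖ = 3/8) (G : E → E) {k : ℕ} {x : E} (hx : inB c k x) :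
    hmap c G x = ((2:ℝ)^k)⁻¹ • G ((2:ℝ)^k • x) := by
  have hex : ∃ j, inB c j x := ⟨k, hx⟩
  rw [hmap, dif_pos hex, inB_unique hc hex.choose_spec hx]

lemma hmap_of_not (G : E → E) {x : E} (hx : ∀ k, ¬ inB c k x) : hmap c G x = x := by
  rw [hmap, dif_neg (by push_neg; exact hx)]

/-- support condition: `G` moves only points in the ball `B₀`. -/
def Supp (c : E) (G : E → E) : Prop := ∀ x, G x ≠ x → ‖x - c‖ ≤ 1/16

lemma supp_fix {G : E → E} (hs : Supp c G) {u : E} (hu : ¬ inB c 0 u) : G u = u := by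
  by_contra h
  exact hu ((inB_zero_iff c).mpr (hs u h))

lemma supp_image (G : E ≃ₜ E) (hG : Supp c ⇑G) {x : E} (hx : G x ≠ x) :
    ‖G x - c‖ ≤ 1/16 := by
  by_contra hb
  push_neg at hb
  have hfix : G (G x) = G x := supp_fix hG (by rw [inB_zero_iff c]; linarith)
  exact hx (G.injective hfix)

lemma supp_symm (G : E ≃ₜ E) (hG : Supp c ⇑G) : Supp c ⇑G.symm := by
  intro x hx
  have h1 : G (G.symm x) = x := G.apply_symm_apply x
  have h2 : G (G.symm x) ≠ G.symm x := by
    intro e; rw [h1] at e; exact hx e.symm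
  calc ‖x - c‖ = ‖G (G.symm x) - c‖ := by rw [h1]
  _ ≤ 1/16 := supp_image G hG h2

lemma inB_zero_image (G : E ≃ₜ E) (hG : Supp c ⇑G) {x : E} (hx : inB c 0 x) :
    inB c 0 (G x) := by
  by_cases h : G x = x
  · rwa [h]
  · exact (inB_zero_iff c).mpr (supp_image G hG h)

lemma inB_smul_iff (k : ℕ) (x : E) : inB c 0 ((2:ℝ)^k • x) ↔ inB c k x := by
  simp [inB]

lemma inB_hmap (hc : ‖c‖ = 3/8) (G : E ≃ₜ E) (hG : Supp c ⇑G) {k : ℕ} {x : E}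
    (hx : inB c k x) : inB c k (hmap c ⇑G x) := by
  rw [hmap_of_inB hc _ hx, ← inB_smul_iff, smul_smul,
    mul_inv_cancel₀ (by positivity : ((2:ℝ)^k) ≠ 0), one_smul]
  exact inB_zero_image G hG ((inB_smul_iff k x).mpr hx)

lemma hmap_comp (hc : ‖c‖ = 3/8) (G1 G2 : E → E)
    (h2 : ∀ w, inB c 0 w → inB c 0 (G2 w)) (x : E) :
    hmap c G1 (hmap c G2 x) = hmap c (G1 ∘ G2) x := by
  by_cases hk : ∃ k, inB c k x
  · obtain ⟨k, hkx⟩ := hk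
    have h2k : (2:ℝ)^k ≠ 0 := by positivity
    rw [hmap_of_inB hc G2 hkx, hmap_of_inB hc (G1 ∘ G2) hkx]
    have hw : inB c k (((2:ℝ)^k)⁻¹ • G2 ((2:ℝ)^k • x)) := by
      rw [← inB_smul_iff, smul_smul, mul_inv_cancel₀ h2k, one_smul]
      exact h2 _ ((inB_smul_iff k x).mpr hkx)
    rw [hmap_of_inB hc G1 hw, smul_smul, mul_inv_cancel₀ h2k, one_smul]
    rfl
  · push_neg at hk
    rw [hmap_of_not G2 hk, hmap_of_not G1 hk, hmap_of_not (G1 ∘ G2) hk]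

lemma hmap_id (hc : ‖c‖ = 3/8) (x : E) : hmap c (id : E → E) x = x := by
  by_cases hk : ∃ k, inB c k x
  · obtain ⟨k, hkx⟩ := hk
    rw [hmap_of_inB hc id hkx, id_eq, smul_smul,
      inv_mul_cancel₀ (by positivity : ((2:ℝ)^k) ≠ 0), one_smul]
  · push_neg at hk
    exact hmap_of_not id hk


lemma hmap_norm_le (hc : ‖c‖ = 3/8) (G : E ≃ₜ E) (hG : Supp c ⇑G) (y : E) :
    ‖hmap c ⇑G y‖ ≤ 2 * ‖y‖ := by
  by_cases hk : ∃ k, inB c k y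
  · obtain ⟨k, hky⟩ := hk
    have h1 := (inB_bounds hc hky).1
    have h2 := (inB_bounds hc (inB_hmap hc G hG hky)).2
    have h3 : (0:ℝ) < 2^k := by positivity
    nlinarith [norm_nonneg (hmap c ⇑G y)]
  · push_neg at hk
    rw [hmap_of_not _ hk]
    linarith [norm_nonneg y]

lemma hmap_continuous (hc : ‖c‖ = 3/8) (G : E ≃ₜ E) (hG : Supp c ⇑G) :
    Continuous (hmap c ⇑G) := by
  rw [continuous_iff_continuousAt]
  intro x
  by_cases hk : ∃ k, inB c k x
  · -- near a ball `B_k` : `hmap` agrees with a continuous formula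
    obtain ⟨k, hkx⟩ := hk
    have hcont : Continuous fun y : E => ((2:ℝ)^k)⁻¹ • G ((2:ℝ)^k • y) :=
      ((G.continuous.comp (continuous_const_smul _)).const_smul _)
    apply hcont.continuousAt.congr
    have hopen : IsOpen {y : E | ‖(2:ℝ)^k • y - c‖ < 1/8} := by
      exact isOpen_lt (((continuous_const_smul ((2:ℝ)^k)).sub continuous_const).norm)
        continuous_const
    have hmem : x ∈ {y : E | ‖(2:ℝ)^k • y - c‖ < 1/8} := lt_of_le_of_lt hkx (by norm_num)
    filter_upwards [hopen.mem_nhds hmem] with y hy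
    have hylo : 1/4 < 2^k * ‖y‖ := by
      have h2 := norm_sub_norm_le c ((2:ℝ)^k • y)
      rw [norm_sub_rev] at h2
      rw [norm_two_pow_smul] at h2
      linarith [hc ▸ h2]
    have hyhi : 2^k * ‖y‖ < 1/2 := by
      have h1 := norm_sub_norm_le ((2:ℝ)^k • y) c
      rw [norm_two_pow_smul] at h1
      linarith [hc ▸ h1]
    by_cases hj : ∃ j, inB c j y
    · obtain ⟨j, hjy⟩ := hj
      have hjk : j = k := by
        by_contra hne
        obtain ⟨hj1, hj2⟩ := inB_bounds hc hjy
        have hy0 : (0:ℝ) ≤ ‖y‖ := norm_nonneg y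
        rcases lt_or_gt_of_ne hne with h | h
        · have := mul_le_mul_of_nonneg_right (two_pow_big h) hy0
          nlinarith
        · have := mul_le_mul_of_nonneg_right (two_pow_big h) hy0
          nlinarith
      subst hjk
      exact (hmap_of_inB hc _ hjy).symm
    · push_neg at hj
      rw [hmap_of_not _ hj]
      have hfix : G ((2:ℝ)^k • y) = (2:ℝ)^k • y := by
        apply supp_fix hG
        rw [inB_smul_iff]
        exact hj k
      rw [hfix, smul_smul, inv_mul_cancel₀ (by positivity : ((2:ℝ)^k) ≠ 0), one_smul]
  · push_neg at hk
    by_cases hx0 : x = 0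
    · -- at the accumulation point `0`
      subst hx0
      have h0 : hmap c ⇑G 0 = 0 := hmap_of_not _ hk
      rw [ContinuousAt, h0]
      rw [Metric.tendsto_nhds_nhds]
      intro ε hε
      refine ⟨ε/2, by positivity, fun {y} hy => ?_⟩
      rw [dist_zero_right] at hy ⊢
      calc ‖hmap c ⇑G y‖ ≤ 2 * ‖y‖ := hmap_norm_le hc G hG y
      _ < ε := by linarith
    · -- away from all balls and from `0`
      have ht : 0 < ‖x‖ := norm_pos_iff.mpr hx0
      obtain ⟨K, hK⟩ : ∃ K : ℕ, 7/(8*‖x‖) < 2^K := pow_unbounded_of_one_lt _ one_lt_two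
      set F : Set E := ⋃ k ∈ Finset.range (K+1), {y : E | inB c k y} with hF
      have hFclosed : IsClosed F := by
        apply Set.Finite.isClosed_biUnion (Finset.finite_toSet _)
        intro k _
        exact isClosed_le (((continuous_const_smul ((2:ℝ)^k)).sub continuous_const).norm)
          continuous_const
      have hxF : x ∉ F := by
        simp only [hF, Set.mem_iUnion]
        rintro ⟨k, _, hky⟩
        exact hk k hky
      have hnb : Fᶜ ∩ Metric.ball x (‖x‖/2) ∈ nhds x :=
        Filter.inter_mem (hFclosed.isOpen_compl.mem_nhds hxF)
          (Metric.ball_mem_nhds _ (by positivity))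
      apply continuousAt_id.congr
      filter_upwards [hnb] with y hy
      obtain ⟨hy1, hy2⟩ := hy
      rw [id_eq]
      symm
      apply hmap_of_not
      intro j hjy
      have hjK : ¬ j ≤ K := by
        intro hle
        apply hy1
        simp only [hF, Set.mem_iUnion]
        exact ⟨j, Finset.mem_range.mpr (by omega), hjy⟩
      push_neg at hjK
      have h2 := (inB_bounds hc hjy).2
      have hKj : (2:ℝ)^K ≤ 2^j := pow_le_pow_right₀ one_le_two (by omega)
      have hyx : ‖x‖/2 < ‖y‖ := by
        have h := norm_sub_norm_le x y
        rw [Metric.mem_ball, dist_comm, dist_eq_norm] at hy2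
        linarith
      have hy0 : (0:ℝ) ≤ ‖y‖ := norm_nonneg y
      have hKpos : (0:ℝ) < 2^K := by positivity
      -- from 2^j * ‖y‖ ≤ 7/16 and 2^K ≤ 2^j : 2^K * ‖y‖ ≤ 7/16
      have h3 : 2^K * ‖y‖ ≤ 7/16 := le_trans (by nlinarith) h2
      -- from hK : 7/(8‖x‖) < 2^K : 7/16 < 2^K * ‖x‖/2 < 2^K * ‖y‖
      have h4 : 7/16 < 2^K * (‖x‖/2) := by
        rw [div_lt_iff₀ (by positivity)] at hK
        nlinarith
      nlinarith

/-- The infinite product homeomorphism. -/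
noncomputable def Hhomeo (hc : ‖c‖ = 3/8) (G : E ≃ₜ E) (hG : Supp c ⇑G) : E ≃ₜ E where
  toFun := hmap c ⇑G
  invFun := hmap c ⇑G.symm
  left_inv := fun x => by
    rw [hmap_comp hc _ _ (fun w hw => inB_zero_image G hG hw)]
    have : ⇑G.symm ∘ ⇑G = id := funext G.symm_apply_apply
    rw [this, hmap_id hc]
  right_inv := fun x => by
    rw [hmap_comp hc _ _ (fun w hw => inB_zero_image G.symm (supp_symm G hG) hw)]
    have : ⇑G ∘ ⇑G.symm = id := funext G.apply_symm_apply
    rw [this, hmap_id hc]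
  continuous_toFun := hmap_continuous hc G hG
  continuous_invFun := hmap_continuous hc G.symm (supp_symm G hG)

@[simp] lemma Hhomeo_apply (hc : ‖c‖ = 3/8) (G : E ≃ₜ E) (hG : Supp c ⇑G) (x : E) :
    Hhomeo hc G hG x = hmap c ⇑G x := rfl


/-! ### The key identity `h (f z) = g' (f (h z))` -/

lemma pow_succ_half (k : ℕ) (z : E) : (2:ℝ)^(k+1) • (1/2 : ℝ) • z = (2:ℝ)^k • z := by
  rw [smul_smul]
  congr 1
  rw [pow_succ]
  ring

lemma key (hc : ‖c‖ = 3/8) (g' : E ≃ₜ E) (hs : Supp c ⇑g') (z : E) :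
    hmap c ⇑g' (fmap z) = g' (fmap (hmap c ⇑g' z)) := by
  by_cases hz : ∃ k, inB c k z
  · obtain ⟨k, hk⟩ := hz
    have hz7 : ‖z‖ ≤ 7/16 := inB_norm_le hc hk
    have hwB : inB c k (hmap c ⇑g' z) := inB_hmap hc g' hs hk
    have hw7 : ‖hmap c ⇑g' z‖ ≤ 7/16 := inB_norm_le hc hwB
    -- RHS
    rw [fmap_of_le (by linarith : ‖hmap c ⇑g' z‖ ≤ 1)]
    have hhalf : ‖(1/2 : ℝ) • hmap c ⇑g' z‖ ≤ 7/32 := by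
      rw [norm_smul, Real.norm_eq_abs, abs_of_pos (by norm_num)]
      linarith
    have hRfix : g' ((1/2 : ℝ) • hmap c ⇑g' z) = (1/2 : ℝ) • hmap c ⇑g' z := by
      apply supp_fix hs
      intro hmem
      have := inB_zero_norm_ge hc hmem
      linarith
    rw [hRfix, hmap_of_inB hc _ hk]
    -- LHS
    rw [fmap_of_le (by linarith : ‖z‖ ≤ 1)]
    have hk1 : inB c (k+1) ((1/2 : ℝ) • z) := by
      rw [inB, pow_succ_half]
      exact hk
    rw [hmap_of_inB hc _ hk1, pow_succ_half]
    rw [smul_smul]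
    congr 1
    rw [pow_succ]
    field_simp
  · push_neg at hz
    rw [hmap_of_not _ hz]
    by_cases h1 : ‖z‖ ≤ 1
    · rw [fmap_of_le h1]
      by_cases h0 : inB c 0 ((1/2 : ℝ) • z)
      · rw [hmap_of_inB hc _ h0]
        norm_num
      · have hnone : ∀ j, ¬ inB c j ((1/2 : ℝ) • z) := by
          intro j hj
        
          cases j with
          | zero => exact h0 hj
          | succ m =>
            apply hz m
            rw [inB] at hj ⊢
            rwa [pow_succ_half] at hj
        rw [hmap_of_not _ hnone]
        exact (supp_fix hs h0).symm
    · push_neg at h1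
      have hf : 1/2 ≤ ‖fmap z‖ := norm_fmap_ge h1.le
      have hno : ∀ j, ¬ inB c j (fmap z) := by
        intro j hj
        have := inB_norm_le hc hj
        linarith
      rw [hmap_of_not _ hno]
      symm
      apply supp_fix hs
      intro hmem
      have := inB_norm_le hc hmem
      linarith


/-! ### Assembly -/

lemma conj_support_compact {E : Type*} [NormedAddCommGroup E] [NormedSpace ℝ E]
    [ProperSpace E] (A T : E ≃ₜ E) (r : ℝ) (hT : ∀ x, T x ≠ x → ‖x‖ ≤ r) :
    IsCompact (closure {x | (A⁻¹ * T * A) x ≠ x}) := by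
  have happ : ∀ x, (A⁻¹ * T * A) x = A.symm (T (A x)) := fun _ => rfl
  have hsub : {x | (A⁻¹ * T * A) x ≠ x} ⊆ ⇑A ⁻¹' (Metric.closedBall 0 r) := by
    intro x hx
    have hTx : T (A x) ≠ A x := by
      intro e
      apply hx
      rw [happ, e]
      exact A.symm_apply_apply x
    exact mem_closedBall_zero_iff.mpr (hT _ hTx)
  have hcl : IsClosed (⇑A ⁻¹' Metric.closedBall 0 r) :=
    (Metric.isClosed_closedBall).preimage A.continuous
  have hcpt : IsCompact (⇑A ⁻¹' Metric.closedBall 0 r) := by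
    rw [← Homeomorph.image_symm]
    exact (isCompact_closedBall 0 r).image A.symm.continuous
  exact hcpt.of_isClosed_subset isClosed_closure (closure_minimal hsub hcl)

theorem main {E : Type*} [NormedAddCommGroup E] [NormedSpace ℝ E] [ProperSpace E]
    (c : E) (hc : ‖c‖ = 3/8) (g : E ≃ₜ E) (hg : IsCompact (closure {x | g x ≠ x})) :
    ∃ f h : E ≃ₜ E, IsCompact (closure {x | f x ≠ x}) ∧ IsCompact (closure {x | h x ≠ x}) ∧
      g = f * h * f⁻¹ * h⁻¹ := by
  obtain ⟨R, hR⟩ := (Metric.isBounded_iff_subset_closedBall 0).mp hg.isBounded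
  set M : ℝ := |R| + 1 with hM
  have hM0 : 0 < M := by positivity
  set ε : ℝ := (16*M)⁻¹ with hεdef
  have hε : 0 < ε := by positivity
  let A : E ≃ₜ E :=
  { toFun := fun x => c + ε • x
    invFun := fun y => ε⁻¹ • (y - c)
    left_inv := fun x => by
      simp only [add_sub_cancel_left, smul_smul, inv_mul_cancel₀ (ne_of_gt hε), one_smul]
    right_inv := fun y => by
      simp only [smul_smul, mul_inv_cancel₀ (ne_of_gt hε), one_smul, add_sub_cancel]
    continuous_toFun := continuous_const.add (continuous_id.const_smul ε)
    continuous_invFun := ((continuous_id.sub continuous_const).const_smul ε⁻¹) }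
  set g' : E ≃ₜ E := A * g * A⁻¹ with hg'def
  have hg'x : ∀ x, g' x = A (g (A.symm x)) := fun _ => rfl
  have hsupp : Supp c ⇑g' := by
    intro x hx
    have hmove : g (A.symm x) ≠ A.symm x := by
      intro e
      apply hx
      rw [hg'x, e]
      exact A.apply_symm_apply x
    have h1 : ‖A.symm x‖ ≤ R := by
      have := hR (subset_closure hmove)
      rwa [Metric.mem_closedBall, dist_zero_right] at this
    have hxc : x - c = ε • A.symm x := by
      have h2 : A (A.symm x) = x := A.apply_symm_apply x
      have h3 : c + ε • A.symm x = x := h2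
      nth_rewrite 1 [← h3]
      rw [add_sub_cancel_left]
    rw [hxc, norm_smul, Real.norm_eq_abs, abs_of_pos hε]
    have h4 : ‖A.symm x‖ ≤ M := le_trans h1 (by rw [hM]; linarith [le_abs_self R])
    calc ε * ‖A.symm x‖ ≤ ε * M := by
          exact mul_le_mul_of_nonneg_left h4 (le_of_lt hε)
    _ = 1/16 := by
          rw [hεdef]
          field_simp
  set fF : E ≃ₜ E := Fhomeo with hfF
  set hH : E ≃ₜ E := Hhomeo hc g' hsupp with hhH
  have hcomm : g' = hH * fF * hH⁻¹ * fF⁻¹ := by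
    ext x
    show g' x = hH (fF (hH.symm (fF.symm x)))
    have hk := key hc g' hsupp (hH.symm (fF.symm x))
    have h2 : hmap c ⇑g' (hH.symm (fF.symm x)) = fF.symm x := hH.apply_symm_apply _
    have h3 : fmap (fF.symm x) = x := fF.apply_symm_apply x
    rw [h2, h3] at hk
    exact hk.symm
  refine ⟨A⁻¹ * hH * A, A⁻¹ * fF * A, ?_, ?_, ?_⟩
  · apply conj_support_compact A hH (7/16)
    intro x hx
    have hex : ∃ k, inB c k x := by
      by_contra hno
      push_neg at hno
      exact hx (hmap_of_not _ hno)
    obtain ⟨k, hk⟩ := hex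
    exact inB_norm_le hc hk
  · apply conj_support_compact A fF 3
    intro x hx
    by_contra h3
    push_neg at h3
    exact hx (fmap_of_ge (le_of_lt h3))
  · have hgA : g = A⁻¹ * g' * A := by rw [hg'def]; group
    rw [hgA, hcomm]
    group

end CommutatorProof

/-- Every homeomorphism of `ℝⁿ` with compact support is a commutator of two
homeomorphisms of `ℝⁿ` with compact support. -/
theorem commutator_of_compact_support (n : ℕ) (g : (Fin n → ℝ) ≃ₜ (Fin n → ℝ))
    (hg : IsCompact (closure {x | g x ≠ x})) :
    ∃ f h : (Fin n → ℝ) ≃ₜ (Fin n → ℝ),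
      IsCompact (closure {x | f x ≠ x}) ∧ IsCompact (closure {x | h x ≠ x}) ∧
      g = f * h * f⁻¹ * h⁻¹ := by
  cases n with
  | zero =>
    refine ⟨1, 1, ?_, ?_, ?_⟩
    · have h1 : {x : Fin 0 → ℝ | (1 : (Fin 0 → ℝ) ≃ₜ (Fin 0 → ℝ)) x ≠ x} = ∅ :=
        Set.eq_empty_iff_forall_notMem.mpr (fun x hx => hx rfl)
      rw [h1, closure_empty]
      exact isCompact_empty
    · have h1 : {x : Fin 0 → ℝ | (1 : (Fin 0 → ℝ) ≃ₜ (Fin 0 → ℝ)) x ≠ x} = ∅ :=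
        Set.eq_empty_iff_forall_notMem.mpr (fun x hx => hx rfl)
      rw [h1, closure_empty]
      exact isCompact_empty
    · ext x i
      exact i.elim0
  | succ m =>
    have hc : ‖(Pi.single (0 : Fin (m+1)) (3/8 : ℝ) : Fin (m+1) → ℝ)‖ = 3/8 := by
      rw [Pi.norm_single]
      simp [Real.norm_eq_abs]
    exact CommutatorProof.main _ hc g hg
end

section
/- If G is a Steinhaus topological group, then every group homomorphism from G into a separable topological group H is continuous. -/
/-!
Given a neighbourhood `U` of `1` in `H`, pick a neighbourhood `V` of `1` with `(V⁻¹ V)^{2k} ⊆ U`.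
A dense sequence of `H` translates `V` over all of `H`, and pulling this cover back along `π`
shows that the symmetric set `W = π⁻¹(V⁻¹ V)` is countably syndetic in `G`. So `W^k` has an
interior point, whence `W^{2k} = (W^k)⁻¹ W^k` is a neighbourhood of `1` mapped by `π` into `U`.
-/

open Pointwise Set Filter Topology

def CountablySyndetic {G : Type*} [Mul G] (W : Set G) : Prop :=
  ∃ c : ℕ → G, ⋃ n, c n • W = univ

theorem exists_mem_nhds_one_pow_subset {M : Type*} [Monoid M] [TopologicalSpace M]
    [ContinuousMul M] {U : Set M} (hU : U ∈ 𝓝 1) : ∀ n : ℕ, ∃ V ∈ 𝓝 (1 : M), V ^ n ⊆ U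
  | 0 => ⟨univ, univ_mem, by simpa using mem_of_mem_nhds hU⟩
  | n + 1 => by
    obtain ⟨V₁, hV₁, hV₁U⟩ := exists_nhds_one_split hU
    obtain ⟨V₂, hV₂, hV₂V₁⟩ := exists_mem_nhds_one_pow_subset hV₁ n
    refine ⟨V₁ ∩ V₂, inter_mem hV₁ hV₂, ?_⟩
    rw [pow_succ]
    rintro _ ⟨a, ha, b, hb, rfl⟩
    exact hV₁U a (hV₂V₁ (pow_subset_pow_left inter_subset_right ha)) b hb.1

section Topological

variable {G : Type*} [Group G] [TopologicalSpace G] [IsTopologicalGroup G]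

theorem exists_mem_nhds_one_inv_mul_pow_subset {U : Set G} (hU : U ∈ 𝓝 1) (n : ℕ) :
    ∃ V ∈ 𝓝 (1 : G), (V⁻¹ * V) ^ n ⊆ U := by
  obtain ⟨N, hN, hNU⟩ := exists_mem_nhds_one_pow_subset hU (2 * n)
  refine ⟨N ∩ N⁻¹, inter_mem hN (inv_mem_nhds_one G hN), ?_⟩
  have hsub : (N ∩ N⁻¹)⁻¹ * (N ∩ N⁻¹) ⊆ N ^ 2 := by
    rw [inter_inv, inv_inv, pow_two]
    exact mul_subset_mul inter_subset_right inter_subset_left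
  calc (((N ∩ N⁻¹)⁻¹ * (N ∩ N⁻¹)) ^ n) ⊆ (N ^ 2) ^ n := pow_subset_pow_left hsub
    _ = N ^ (2 * n) := (pow_mul N 2 n).symm
    _ ⊆ U := hNU

theorem inv_mul_self_mem_nhds_one {A : Set G} (hA : (interior A).Nonempty) : A⁻¹ * A ∈ 𝓝 1 := by
  obtain ⟨a, ha⟩ := hA
  rw [← mem_interior_iff_mem_nhds]
  refine subset_interior_mul_right ⟨a⁻¹, inv_mem_inv.2 (interior_subset ha), a, ha, ?_⟩
  exact inv_mul_cancel a

theorem countablySyndetic_of_nonempty_interior [TopologicalSpace.SeparableSpace G] {V : Set G}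
    (hV : (interior V).Nonempty) : CountablySyndetic V := by
  obtain ⟨x, hx⟩ := hV
  have hd := TopologicalSpace.denseRange_denseSeq G
  refine ⟨TopologicalSpace.denseSeq G, eq_univ_of_forall fun h => mem_iUnion.2 ?_⟩
  have hopen : IsOpen {d : G | d⁻¹ * h ∈ interior V} :=
    isOpen_interior.preimage (by fun_prop)
  obtain ⟨n, hn⟩ := hd.exists_mem_open hopen ⟨h * x⁻¹, by simpa using hx⟩
  exact ⟨n, _, interior_subset hn, mul_inv_cancel_left _ h⟩

end Topological

theorem CountablySyndetic.preimage_inv_mul {G H : Type*} [Group G] [Group H] {S : Set H}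
    (hS : CountablySyndetic S) (π : G →* H) : CountablySyndetic (π ⁻¹' (S⁻¹ * S)) := by
  obtain ⟨d, hd⟩ := hS
  have hchoice : ∀ n, ∃ g : G, (∃ g', π g' ∈ d n • S) → π g ∈ d n • S := fun n => by
    by_cases h : ∃ g', π g' ∈ d n • S
    · exact ⟨h.choose, fun _ => h.choose_spec⟩
    · exact ⟨1, fun h' => absurd h' h⟩
  choose c hc using hchoice
  refine ⟨c, eq_univ_of_forall fun g => mem_iUnion.2 ?_⟩
  obtain ⟨n, s, hs, hgs⟩ := mem_iUnion.1 (hd ▸ mem_univ (π g))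
  obtain ⟨s', hs', hcs'⟩ := hc n ⟨g, s, hs, hgs⟩
  refine ⟨n, (c n)⁻¹ * g, ⟨s'⁻¹, inv_mem_inv.2 hs', s, hs, ?_⟩, mul_inv_cancel_left _ g⟩
  simp only [smul_eq_mul] at hgs hcs'
  rw [map_mul, map_inv, ← hgs, ← hcs']
  group

theorem inv_preimage_inv_mul_self {G H : Type*} [Group G] [Group H] (π : G →* H) (S : Set H) :
    (π ⁻¹' (S⁻¹ * S))⁻¹ = π ⁻¹' (S⁻¹ * S) := by
  ext g
  rw [Set.mem_inv, mem_preimage, mem_preimage, map_inv, ← Set.mem_inv, mul_inv_rev, inv_inv]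

/-- If `G` is a Steinhaus topological group (there is `k ≥ 1` such that `W^k` has
nonempty interior for every symmetric countably syndetic `W ⊆ G`), then every
homomorphism from `G` into a separable topological group is continuous. -/
theorem steinhaus_implies_automatic_continuity (G : Type*) [Group G] [TopologicalSpace G]
    [IsTopologicalGroup G]
    (hSteinhaus : ∃ k : ℕ, 1 ≤ k ∧ ∀ W : Set G, W⁻¹ = W →
      (∃ c : ℕ → G, (⋃ n, c n • W) = Set.univ) → (interior (W ^ k)).Nonempty)
    (H : Type*) [Group H] [TopologicalSpace H] [IsTopologicalGroup H]
    [TopologicalSpace.SeparableSpace H] (π : G →* H) :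
    Continuous π := by
  obtain ⟨k, -, hSt⟩ := hSteinhaus
  refine continuous_of_continuousAt_one π fun U hU => ?_
  rw [map_one] at hU
  obtain ⟨V, hV, hVU⟩ := exists_mem_nhds_one_inv_mul_pow_subset hU (k + k)
  set W := π ⁻¹' (V⁻¹ * V)
  have hW : W⁻¹ = W := inv_preimage_inv_mul_self π V
  have hWsyn : CountablySyndetic W :=
    (countablySyndetic_of_nonempty_interior ⟨1, mem_interior_iff_mem_nhds.2 hV⟩).preimage_inv_mul π
  have hWk : W ^ (k + k) ∈ 𝓝 1 := by
    simpa only [← inv_pow, hW, ← pow_add] using inv_mul_self_mem_nhds_one (hSt W hW hWsyn)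
  exact mem_map.2 <| mem_of_superset hWk ((preimage_pow_subset π _ _).trans (preimage_mono hVU))
end

section
/- Let G be a Hausdorff topological group such that every nonempty open subset covers G by countably many left translates. If every homomorphism from a given topological group K into any second-countable Hausdorff topological group is continuous, then every homomorphism from K into G is continuous. -/
/-!
Every neighbourhood `U` of `1` in an ω-narrow group `G` belongs to a countable family `𝒱` of
neighbourhoods of `1` such that every `W ∈ 𝒱` contains `V * V`, `V⁻¹` and, for each `x`, some
conjugate `x V' x⁻¹` with `V, V' ∈ 𝒱`. The conjugation condition needs only countably many `V'`
per `W`, because countably many translates of a small neighbourhood cover `G`. Such a family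
generates a coarser group topology in which `U` is still a neighbourhood of `1`; being first
countable and ω-narrow, it is second countable. Hence the topology of `G` is the infimum of its
coarser second-countable group topologies, and a homomorphism into `G` is continuous as soon as
it is continuous into the Hausdorff separation quotients of all of these.
-/

open Pointwise Set Filter Topology TopologicalSpace

universe u

theorem exists_countable_forall_mapsTo {α ι : Type*} [Countable ι] (f : ι → α → α) (a : α) :
    ∃ S : Set α, S.Countable ∧ a ∈ S ∧ ∀ i, MapsTo (f i) S S := by
  refine ⟨range fun l : List ι => l.foldr f a, countable_range _, ⟨[], rfl⟩, ?_⟩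
  rintro i _ ⟨l, rfl⟩
  exact ⟨i :: l, rfl⟩

namespace GroupFilterBasis

variable {G : Type*} [Group G]

abbrev ofFilter (F : Filter G) (one : pure 1 ≤ F)
    (mul : Tendsto (fun p : G × G => p.1 * p.2) (F ×ˢ F) F) (inv : Tendsto (·⁻¹) F F)
    (conj : ∀ x₀ : G, Tendsto (fun x => x₀ * x * x₀⁻¹) F F) : GroupFilterBasis G where
  toFilterBasis := F.asBasis
  one' hU := one hU
  mul' hU := by
    obtain ⟨V, hV, hVU⟩ := mem_prod_self_iff.1 (mul hU)
    exact ⟨V, hV, Set.mul_subset_iff.2 fun a ha b hb => hVU (mk_mem_prod ha hb)⟩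
  inv' hU := ⟨_, inv hU, subset_rfl⟩
  conj' x₀ _ hU := ⟨_, conj x₀ hU, subset_rfl⟩

theorem nhds_one_ofFilter (F : Filter G) (one mul inv conj) :
    @nhds G (ofFilter F one mul inv conj).topology 1 = F :=
  (nhds_one_eq _).trans (asBasis_filter F)

end GroupFilterBasis

theorem IsTopologicalGroup.le_of_nhds_one_le {G : Type*} [Group G] {t t' : TopologicalSpace G}
    (tg : @IsTopologicalGroup G t _) (tg' : @IsTopologicalGroup G t' _)
    (h : @nhds G t 1 ≤ @nhds G t' 1) : t ≤ t' :=
  le_of_nhds_le_nhds fun x => by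
    rw [← @nhds_translation_mul_inv G t _ _ x, ← @nhds_translation_mul_inv G t' _ _ x]
    exact comap_mono h

theorem MonoidHom.continuous_of_secondCountableTopology {K : Type*} [Group K]
    [TopologicalSpace K]
    (hK : ∀ (H : Type u) [Group H] [TopologicalSpace H] [IsTopologicalGroup H] [T2Space H]
      [SecondCountableTopology H] (φ : K →* H), Continuous φ)
    {G : Type u} [Group G] [TopologicalSpace G] [IsTopologicalGroup G] [SecondCountableTopology G]
    (π : K →* G) : Continuous π := by
  have : SecondCountableTopology (SeparationQuotient G) :=
    SeparationQuotient.isQuotientMap_mk.secondCountableTopology SeparationQuotient.isOpenMap_mk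
  -- the separation quotient of a topological group is T0, hence T3
  exact SeparationQuotient.isInducing_mk.continuous_iff.2 <|
    hK _ (SeparationQuotient.mkMonoidHom.comp π)

def IsOmegaNarrow (G : Type*) [Group G] [TopologicalSpace G] : Prop :=
  ∀ U : Set G, IsOpen U → U.Nonempty → ∃ c : ℕ → G, ⋃ n, c n • U = univ

namespace IsOmegaNarrow

section

variable {G : Type*} [Group G] [TopologicalSpace G]

theorem exists_iUnion_smul_eq_univ (hG : IsOmegaNarrow G) {U : Set G} (hU : U ∈ 𝓝 (1 : G)) :
    ∃ c : ℕ → G, ⋃ n, c n • U = univ := by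
  obtain ⟨c, hc⟩ := hG _ isOpen_interior ⟨1, mem_interior_iff_mem_nhds.2 hU⟩
  exact ⟨c, eq_univ_of_univ_subset <| hc ▸ iUnion_mono fun n => smul_set_mono interior_subset⟩

end

variable {G : Type*} [Group G] [τ : TopologicalSpace G] [IsTopologicalGroup G]

theorem secondCountableTopology [(𝓝 (1 : G)).IsCountablyGenerated] (hG : IsOmegaNarrow G) :
    SecondCountableTopology G := by
  obtain ⟨u, hu⟩ := (𝓝 (1 : G)).exists_antitone_basis
  choose c hc using fun n => hG.exists_iUnion_smul_eq_univ (interior_mem_nhds.2 (hu.mem n))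
  refine (isTopologicalBasis_of_isOpen_of_nhds (s := range fun p : ℕ × ℕ =>
    c p.1 p.2 • interior (u p.1)) ?_ ?_).secondCountableTopology (countable_range _)
  · rintro _ ⟨p, rfl⟩
    exact isOpen_interior.smul _
  · intro x O hx hO
    have hcont : Tendsto (fun p : G × G => x * p.1⁻¹ * p.2) (𝓝 1 ×ˢ 𝓝 1) (𝓝 x) := by
      rw [← nhds_prod_eq]
      simpa using (by fun_prop : Continuous fun p : G × G => x * p.1⁻¹ * p.2).tendsto (1, 1)
    obtain ⟨m, -, hm⟩ := hu.1.prod_self.mem_iff.1 (hcont (hO.mem_nhds hx))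
    -- `x = c m n * v` with `v ∈ u m`, so `c m n • u m = x • (v⁻¹ • u m) ⊆ O`
    obtain ⟨n, v, hv, rfl⟩ :=
      mem_iUnion.1 (hc m ▸ mem_univ x : x ∈ ⋃ n, c m n • interior (u m))
    refine ⟨_, ⟨(m, n), rfl⟩, ⟨v, hv, rfl⟩, ?_⟩
    rintro _ ⟨w, hw, rfl⟩
    have := hm (mk_mem_prod (interior_subset hv) (interior_subset hw))
    simpa [mul_assoc] using this

theorem exists_seq_nhds_one_mapsTo_conj (hG : IsOmegaNarrow G) {W : Set G}
    (hW : W ∈ 𝓝 (1 : G)) :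
    ∃ γ : ℕ → Set G, (∀ n, γ n ∈ 𝓝 (1 : G)) ∧ ∀ x, ∃ n, MapsTo (fun y => x * y * x⁻¹) (γ n) W := by
  obtain ⟨V, hV, hVW⟩ : ∃ V ∈ 𝓝 (1 : G), ∀ a ∈ V, ∀ b ∈ V, a * b * a⁻¹ ∈ W := by
    have : Tendsto (fun p : G × G => p.1 * p.2 * p.1⁻¹) (𝓝 1 ×ˢ 𝓝 1) (𝓝 1) := by
      rw [← nhds_prod_eq]
      simpa using (by fun_prop : Continuous fun p : G × G => p.1 * p.2 * p.1⁻¹).tendsto (1, 1)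
    exact eventually_prod_self_iff.1 (this hW)
  obtain ⟨c, hc⟩ := hG.exists_iUnion_smul_eq_univ (inv_mem_nhds_one G hV)
  refine ⟨fun n => (fun y => (c n)⁻¹ * y * c n) ⁻¹' V, fun n => ?_, fun x => ?_⟩
  · refine ContinuousAt.preimage_mem_nhds (by fun_prop) ?_
    simpa using hV
  · obtain ⟨n, v, hv, hx⟩ := mem_iUnion.1 (hc ▸ mem_univ x⁻¹ : x⁻¹ ∈ ⋃ n, c n • V⁻¹)
    -- `x = v⁻¹ * (c n)⁻¹` with `v⁻¹ ∈ V`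
    refine ⟨n, fun y hy => ?_⟩
    have := hVW _ hv _ hy
    rw [← inv_inv x, ← hx]
    simpa [mul_assoc] using this

theorem exists_countable_nhds_one_family (hG : IsOmegaNarrow G) {U : Set G}
    (hU : U ∈ 𝓝 (1 : G)) :
    ∃ 𝒱 : Set (Set G), 𝒱.Countable ∧ U ∈ 𝒱 ∧ (∀ W ∈ 𝒱, W ∈ 𝓝 (1 : G)) ∧
      (∀ W ∈ 𝒱, ∃ V ∈ 𝒱, V * V ⊆ W ∧ V⁻¹ ⊆ W) ∧
      ∀ W ∈ 𝒱, ∀ x, ∃ V ∈ 𝒱, MapsTo (fun y => x * y * x⁻¹) V W := by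
  have hsplit (W : {W : Set G // W ∈ 𝓝 1}) :
      ∃ V : {V : Set G // V ∈ 𝓝 1}, V.1 * V.1 ⊆ W ∧ V.1⁻¹ ⊆ W := by
    obtain ⟨V, hV, -, hVinv, hVW⟩ := exists_closed_nhds_one_inv_eq_mul_subset W.2
    refine ⟨⟨V, hV⟩, hVW, ?_⟩
    rw [hVinv]
    exact (subset_mul_left V (mem_of_mem_nhds hV)).trans hVW
  have hconj (W : {W : Set G // W ∈ 𝓝 1}) : ∃ γ : ℕ → {V : Set G // V ∈ 𝓝 1},
      ∀ x, ∃ n, MapsTo (fun y => x * y * x⁻¹) (γ n).1 W := by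
    obtain ⟨γ, hγ, hγW⟩ := hG.exists_seq_nhds_one_mapsTo_conj W.2
    exact ⟨fun n => ⟨γ n, hγ n⟩, hγW⟩
  choose ψ hψ using hsplit
  choose γ hγ using hconj
  obtain ⟨S, hSc, hUS, hS⟩ :=
    exists_countable_forall_mapsTo (fun i : Option ℕ => i.elim ψ fun n W => γ W n) ⟨U, hU⟩
  refine ⟨Subtype.val '' S, hSc.image _, ⟨_, hUS, rfl⟩, ?_, ?_, ?_⟩
  · rintro _ ⟨W, -, rfl⟩
    exact W.2
  · rintro _ ⟨W, hW, rfl⟩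
    exact ⟨_, ⟨_, hS none hW, rfl⟩, hψ W⟩
  · rintro _ ⟨W, hW, rfl⟩ x
    obtain ⟨n, hn⟩ := hγ W x
    exact ⟨_, ⟨_, hS (some n) hW, rfl⟩, hn⟩

theorem exists_secondCountable_groupTopology (hG : IsOmegaNarrow G) {U : Set G}
    (hU : U ∈ 𝓝 (1 : G)) :
    ∃ t : TopologicalSpace G, @IsTopologicalGroup G t _ ∧ @SecondCountableTopology G t ∧
      τ ≤ t ∧ U ∈ @nhds G t 1 := by
  obtain ⟨𝒱, h𝒱c, hU𝒱, h𝒱, hmul, hconj⟩ := hG.exists_countable_nhds_one_family hU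
  let B := GroupFilterBasis.ofFilter (generate 𝒱)
    (le_generate_iff.2 fun W hW => show (1 : G) ∈ W from mem_of_mem_nhds (h𝒱 W hW))
    (le_generate_iff.2 fun W hW => by
      obtain ⟨V, hV, hVW, -⟩ := hmul W hW
      exact mem_prod_self_iff.2
        ⟨V, mem_generate_of_mem hV, fun p hp => hVW (mul_mem_mul hp.1 hp.2)⟩)
    (le_generate_iff.2 fun W hW => by
      obtain ⟨V, hV, -, hVW⟩ := hmul W hW
      exact mem_map.2 <|
        mem_of_superset (mem_generate_of_mem hV) fun x hx => hVW (inv_mem_inv.2 hx))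
    (fun x => le_generate_iff.2 fun W hW => by
      obtain ⟨V, hV, hVW⟩ := hconj W hW x
      exact mem_map.2 <| mem_of_superset (mem_generate_of_mem hV) hVW)
  have hB : @nhds G B.topology 1 = generate 𝒱 := GroupFilterBasis.nhds_one_ofFilter ..
  have hτB : τ ≤ B.topology :=
    IsTopologicalGroup.le_of_nhds_one_le inferInstance B.isTopologicalGroup
      (hB ▸ le_generate_iff.2 h𝒱)
  have : (@nhds G B.topology 1).IsCountablyGenerated := hB ▸ ⟨⟨𝒱, h𝒱c, rfl⟩⟩
  exact ⟨B.topology, B.isTopologicalGroup,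
    @secondCountableTopology G _ B.topology B.isTopologicalGroup this fun V hV => hG V (hτB V hV),
    hτB, hB ▸ mem_generate_of_mem hU𝒱⟩

theorem topology_eq_sInf_secondCountable (hG : IsOmegaNarrow G) :
    τ = sInf {t | @IsTopologicalGroup G t _ ∧ @SecondCountableTopology G t ∧ τ ≤ t} := by
  refine le_antisymm (le_sInf fun t ht => ht.2.2) <| IsTopologicalGroup.le_of_nhds_one_le
    (topologicalGroup_sInf fun t ht => ht.1) inferInstance fun U hU => ?_
  obtain ⟨t, htg, hsc, hτt, hUt⟩ := hG.exists_secondCountable_groupTopology hU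
  rw [nhds_sInf]
  exact mem_iInf_of_mem t (mem_iInf_of_mem ⟨htg, hsc, hτt⟩ hUt)

end IsOmegaNarrow

theorem continuous_into_countably_covered_group_general (K : Type*) [Group K] [TopologicalSpace K]
    (G : Type u) [Group G] [TopologicalSpace G] [IsTopologicalGroup G]
    (hcover : ∀ U : Set G, IsOpen U → U.Nonempty →
      ∃ c : ℕ → G, (⋃ n, c n • U) = Set.univ)
    (hK : ∀ (H : Type u) [Group H] [TopologicalSpace H] [IsTopologicalGroup H] [T2Space H]
      [SecondCountableTopology H] (φ : K →* H), Continuous φ)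
    (π : K →* G) : Continuous π := by
  rw [IsOmegaNarrow.topology_eq_sInf_secondCountable hcover, continuous_sInf_rng]
  rintro t ⟨htg, hsc, -⟩
  exact @MonoidHom.continuous_of_secondCountableTopology K _ _ hK G _ t htg hsc π

/-- If every nonempty open subset of a Hausdorff group `G` covers `G` by countably
many left translates, and every homomorphism from `K` into a second-countable
Hausdorff group is continuous, then every homomorphism from `K` into `G` is
continuous. -/
theorem continuous_into_countably_covered_group (K : Type*) [Group K] [TopologicalSpace K]
    (G : Type u) [Group G] [TopologicalSpace G] [IsTopologicalGroup G] [T2Space G]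
    (hcover : ∀ U : Set G, IsOpen U → U.Nonempty →
      ∃ c : ℕ → G, (⋃ n, c n • U) = Set.univ)
    (hK : ∀ (H : Type u) [Group H] [TopologicalSpace H] [IsTopologicalGroup H] [T2Space H]
      [SecondCountableTopology H] (φ : K →* H), Continuous φ)
    (π : K →* G) : Continuous π :=
  continuous_into_countably_covered_group_general K G hcover hK π
end

section
/- Let G be a topological group. If every group homomorphism from G to Homeo([0,1]^ℕ) (with the compact-open topology) is continuous, then every group homomorphism from G to any separable topological group is continuous. -/
open Pointwise Set Topology

/-- The compact-open topology on the homeomorphism group of the Hilbert cube. -/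
noncomputable def hilbertCubeHomeoTop :
    TopologicalSpace ((ℕ → unitInterval) ≃ₜ (ℕ → unitInterval)) :=
  TopologicalSpace.induced
    (fun g : (ℕ → unitInterval) ≃ₜ (ℕ → unitInterval) =>
      (g : C(ℕ → unitInterval, ℕ → unitInterval)))
    ContinuousMap.compactOpen

/-!
Let `U` be a neighbourhood of `1` in the separable group `H`. By Birkhoff–Kakutani there is a group
seminorm `N` on `H`, continuous at `1`, with `N ≥ 1/2` off `U`. Let `M` consist of countably many
copies of `H`, with distance `√(min 1 (N (x * y⁻¹)))` inside a copy and `1` between copies, and let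
`p` be a dense sequence in `M` whose points are pairwise at positive distance. Right translation
makes `H` act isometrically on `M`, hence on the compact set `K` of `1`-Lipschitz maps
`p → [0,1]` through their McShane extensions. The square root makes every triangle inequality
between points of `p` strict, so each coordinate of a point of `K` ranges over a nondegenerate
interval determined by the previous ones, and rescaling these intervals gives `K ≃ₜ [0,1]^ℕ`.
The resulting `Φ : H →* Homeo([0,1]^ℕ)` moves the point `x₀ = dist(p ·, (1, 0))` by at least a
fixed amount, measured by the McShane extension at `(1, 0)`, whenever `h ∉ U`; continuity of
`Φ ∘ π` at `1` then makes `π ⁻¹' U` a neighbourhood of `1`.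
-/

open Filter
open scoped NNReal

namespace HilbertCubeRep

section LipschitzBody

variable {M : Type*} [PseudoMetricSpace M] (p : ℕ → M)

def StrictTriangle : Prop :=
  ∀ ⦃i j k⦄, i ≠ j → j ≠ k → i ≠ k → dist (p i) (p k) < dist (p i) (p j) + dist (p j) (p k)

def lipschitzBody : Set (ℕ → unitInterval) :=
  {x | ∀ i j, |(x i : ℝ) - x j| ≤ dist (p i) (p j)}

/-- Given `x 0, …, x (N - 1)`, the values of `x N` compatible with membership in `lipschitzBody p`
form the interval `[lowerEnv p x N N, upperEnv p x N N]`. -/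
def lowerEnv (x : ℕ → ℝ) (N : ℕ) : ℕ → ℝ
  | 0 => 0
  | k + 1 => max (lowerEnv x N k) (x k - dist (p N) (p k))

def upperEnv (x : ℕ → ℝ) (N : ℕ) : ℕ → ℝ
  | 0 => 1
  | k + 1 => min (upperEnv x N k) (x k + dist (p N) (p k))

variable {p}

theorem StrictTriangle.dist_pos (hp : StrictTriangle p) {i j : ℕ} (hij : i ≠ j) :
    0 < dist (p i) (p j) := by
  have h₁ := hp (k := i + j + 1) hij (by omega) (by omega)
  have h₂ := hp (k := i + j + 1) hij.symm (by omega) (by omega)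
  linarith [dist_comm (p i) (p j)]

theorem isClosed_lipschitzBody : IsClosed (lipschitzBody p) := by
  simp only [lipschitzBody, ofPred_forall]
  exact isClosed_iInter fun i => isClosed_iInter fun j => isClosed_le (by fun_prop) continuous_const

section Envelopes

variable {x y : ℕ → ℝ} {N k : ℕ} {r : ℝ}

theorem lowerEnv_lt_iff : lowerEnv p x N k < r ↔ 0 < r ∧ ∀ m < k, x m - dist (p N) (p m) < r := by
  induction k with
  | zero => simp [lowerEnv]
  | succ k ih => simp only [lowerEnv, max_lt_iff, ih, Nat.forall_lt_succ_right, and_assoc]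

theorem lowerEnv_le_iff : lowerEnv p x N k ≤ r ↔ 0 ≤ r ∧ ∀ m < k, x m - dist (p N) (p m) ≤ r := by
  induction k with
  | zero => simp [lowerEnv]
  | succ k ih => simp only [lowerEnv, max_le_iff, ih, Nat.forall_lt_succ_right, and_assoc]

theorem lt_upperEnv_iff : r < upperEnv p x N k ↔ r < 1 ∧ ∀ m < k, r < x m + dist (p N) (p m) := by
  induction k with
  | zero => simp [upperEnv]
  | succ k ih => simp only [upperEnv, lt_min_iff, ih, Nat.forall_lt_succ_right, and_assoc]

theorem le_upperEnv_iff : r ≤ upperEnv p x N k ↔ r ≤ 1 ∧ ∀ m < k, r ≤ x m + dist (p N) (p m) := by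
  induction k with
  | zero => simp [upperEnv]
  | succ k ih => simp only [upperEnv, le_min_iff, ih, Nat.forall_lt_succ_right, and_assoc]

theorem lowerEnv_congr (h : ∀ m < k, x m = y m) : lowerEnv p x N k = lowerEnv p y N k := by
  induction k with
  | zero => rfl
  | succ k ih => simp only [lowerEnv, ih fun m hm => h m (by omega), h k k.lt_succ_self]

theorem upperEnv_congr (h : ∀ m < k, x m = y m) : upperEnv p x N k = upperEnv p y N k := by
  induction k with
  | zero => rfl
  | succ k ih => simp only [upperEnv, ih fun m hm => h m (by omega), h k k.lt_succ_self]

theorem continuous_lowerEnv {A : Type*} [TopologicalSpace A] {X : A → ℕ → ℝ}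
    (hX : ∀ m < k, Continuous fun a => X a m) : Continuous fun a => lowerEnv p (X a) N k := by
  induction k with
  | zero => exact continuous_const
  | succ k ih =>
    exact (ih fun m hm => hX m (by omega)).max ((hX k k.lt_succ_self).sub continuous_const)

theorem continuous_upperEnv {A : Type*} [TopologicalSpace A] {X : A → ℕ → ℝ}
    (hX : ∀ m < k, Continuous fun a => X a m) : Continuous fun a => upperEnv p (X a) N k := by
  induction k with
  | zero => exact continuous_const
  | succ k ih =>
    exact (ih fun m hm => hX m (by omega)).min ((hX k k.lt_succ_self).add continuous_const)

theorem mem_Icc_envs_iff :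
    x N ∈ Icc (lowerEnv p x N N) (upperEnv p x N N) ↔
      x N ∈ Icc 0 1 ∧ ∀ m < N, |x N - x m| ≤ dist (p N) (p m) := by
  simp only [mem_Icc, lowerEnv_le_iff, le_upperEnv_iff, abs_sub_le_iff]
  constructor
  · rintro ⟨⟨h0, hlo⟩, h1, hhi⟩
    exact ⟨⟨h0, h1⟩, fun m hm => ⟨by linarith [hhi m hm], by linarith [hlo m hm]⟩⟩
  · rintro ⟨⟨h0, h1⟩, h⟩
    exact ⟨⟨h0, fun m hm => by linarith [h m hm]⟩, h1, fun m hm => by linarith [h m hm]⟩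

theorem forall_lt_mem_Icc_envs_iff :
    (∀ n < N, x n ∈ Icc (lowerEnv p x n n) (upperEnv p x n n)) ↔
      (∀ n < N, x n ∈ Icc 0 1) ∧ ∀ i < N, ∀ j < N, |x i - x j| ≤ dist (p i) (p j) := by
  simp only [mem_Icc_envs_iff]
  constructor
  · intro h
    refine ⟨fun n hn => (h n hn).1, fun i hi j hj => ?_⟩
    rcases lt_trichotomy i j with hij | rfl | hij
    · rw [abs_sub_comm, dist_comm]; exact (h j hj).2 i hij
    · simp
    · exact (h i hi).2 j hij
  · exact fun h n hn => ⟨h.1 n hn, fun m hm => h.2 n hn m (hm.trans hn)⟩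

theorem forall_mem_Icc_envs_iff :
    (∀ n, x n ∈ Icc (lowerEnv p x n n) (upperEnv p x n n)) ↔
      (∀ n, x n ∈ Icc 0 1) ∧ ∀ i j, |x i - x j| ≤ dist (p i) (p j) := by
  refine ⟨fun h => ?_, fun h n => mem_Icc_envs_iff.2 ⟨h.1 n, fun m _ => h.2 n m⟩⟩
  have h' := fun N => forall_lt_mem_Icc_envs_iff.1 fun n (_ : n < N) => h n
  exact ⟨fun n => (h' (n + 1)).1 n n.lt_succ_self,
    fun i j => (h' (max i j + 1)).2 i (by omega) j (by omega)⟩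

theorem lowerEnv_lt_upperEnv (hp : StrictTriangle p)
    (h : ∀ n < N, x n ∈ Icc (lowerEnv p x n n) (upperEnv p x n n)) :
    lowerEnv p x N N < upperEnv p x N N := by
  obtain ⟨hx, hlip⟩ := forall_lt_mem_Icc_envs_iff.1 h
  refine lowerEnv_lt_iff.2 ⟨lt_upperEnv_iff.2 ⟨one_pos, fun m hm => ?_⟩, fun m hm => ?_⟩
  · linarith [(hx m hm).1, hp.dist_pos (i := N) (j := m) (by omega)]
  · have hNm := hp.dist_pos (i := N) (j := m) (by omega)
    refine lt_upperEnv_iff.2 ⟨by linarith [(hx m hm).2], fun k hk => ?_⟩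
    rcases eq_or_ne m k with rfl | hmk
    · linarith
    · have := hp (i := m) (j := N) (k := k) (by omega) (by omega) hmk
      linarith [(abs_sub_le_iff.1 (hlip m hm k hk)).1, dist_comm (p m) (p N)]

end Envelopes

variable (p) in
def cubeToBodyAux (t : ℕ → ℝ) : ℕ → ℕ → ℝ
  | 0 => fun _ => 0
  | N + 1 =>
    let x := cubeToBodyAux t N
    Function.update x N (lowerEnv p x N N + t N * (upperEnv p x N N - lowerEnv p x N N))

variable (p) in
/-- Coordinate `N` sits at relative position `t N` in the interval that the earlier coordinates
allow for it. -/
def cubeToBody (t : ℕ → ℝ) (N : ℕ) : ℝ := cubeToBodyAux p t (N + 1) N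

variable (p) in
noncomputable def bodyToCube (x : ℕ → ℝ) (N : ℕ) : ℝ :=
  (x N - lowerEnv p x N N) / (upperEnv p x N N - lowerEnv p x N N)

section Parametrization

variable {t x : ℕ → ℝ}

theorem cubeToBodyAux_eq {N m : ℕ} (hm : m < N) : cubeToBodyAux p t N m = cubeToBody p t m := by
  induction N with
  | zero => omega
  | succ N ih =>
    rcases Nat.lt_succ_iff_lt_or_eq.1 hm with hm | rfl
    · rw [cubeToBodyAux, Function.update_of_ne hm.ne, ih hm]
    · rfl

theorem cubeToBody_eq (N : ℕ) :
    cubeToBody p t N = lowerEnv p (cubeToBody p t) N N +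
      t N * (upperEnv p (cubeToBody p t) N N - lowerEnv p (cubeToBody p t) N N) := by
  have h : ∀ m < N, cubeToBodyAux p t N m = cubeToBody p t m := fun m => cubeToBodyAux_eq
  rw [cubeToBody, cubeToBodyAux, Function.update_self, lowerEnv_congr h, upperEnv_congr h]

theorem cubeToBody_mem_Icc (hp : StrictTriangle p) (ht : ∀ n, t n ∈ Icc 0 1) (N : ℕ) :
    cubeToBody p t N ∈ Icc (lowerEnv p (cubeToBody p t) N N) (upperEnv p (cubeToBody p t) N N) := by
  induction N using Nat.strong_induction_on with
  | _ N ih =>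
    have hlt := lowerEnv_lt_upperEnv hp ih
    rw [cubeToBody_eq N]
    constructor <;> nlinarith [(ht N).1, (ht N).2]

theorem bodyToCube_cubeToBody (hp : StrictTriangle p) (ht : ∀ n, t n ∈ Icc 0 1) (N : ℕ) :
    bodyToCube p (cubeToBody p t) N = t N := by
  have hlt := lowerEnv_lt_upperEnv (N := N) hp fun n _ => cubeToBody_mem_Icc hp ht n
  rw [bodyToCube, cubeToBody_eq N]
  field_simp [(sub_pos.2 hlt).ne']
  ring

theorem cubeToBody_bodyToCube (hp : StrictTriangle p)
    (hx : ∀ n, x n ∈ Icc (lowerEnv p x n n) (upperEnv p x n n)) (N : ℕ) :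
    cubeToBody p (bodyToCube p x) N = x N := by
  induction N using Nat.strong_induction_on with
  | _ N ih =>
    have hlt := lowerEnv_lt_upperEnv (N := N) hp fun n _ => hx n
    rw [cubeToBody_eq N, lowerEnv_congr ih, upperEnv_congr ih, bodyToCube]
    field_simp [(sub_pos.2 hlt).ne']
    ring

theorem bodyToCube_mem_Icc (hp : StrictTriangle p)
    (hx : ∀ n, x n ∈ Icc (lowerEnv p x n n) (upperEnv p x n n)) (N : ℕ) :
    bodyToCube p x N ∈ Icc 0 1 := by
  have hlt := sub_pos.2 (lowerEnv_lt_upperEnv (N := N) hp fun n _ => hx n)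
  exact ⟨div_nonneg (by linarith [(hx N).1]) hlt.le, (div_le_one hlt).2 (by linarith [(hx N).2])⟩

theorem continuous_cubeToBody (N : ℕ) :
    Continuous fun t : ℕ → unitInterval => cubeToBody p (fun n => t n) N := by
  induction N using Nat.strong_induction_on with
  | _ N ih =>
    simp_rw [cubeToBody_eq N]
    have hlo := continuous_lowerEnv (p := p) (N := N) ih
    have hhi := continuous_upperEnv (p := p) (N := N) ih
    exact hlo.add ((continuous_subtype_val.comp (continuous_apply N)).mul (hhi.sub hlo))

end Parametrization

variable (p) in
noncomputable def cubeEquiv (hp : StrictTriangle p) : (ℕ → unitInterval) ≃ lipschitzBody p where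
  toFun t :=
    have h := forall_mem_Icc_envs_iff.1 (cubeToBody_mem_Icc hp fun n => (t n).2)
    ⟨fun n => ⟨cubeToBody p (fun n => t n) n, h.1 n⟩, h.2⟩
  invFun x n := ⟨bodyToCube p (fun n => x.1 n) n,
    bodyToCube_mem_Icc hp (forall_mem_Icc_envs_iff.2 ⟨fun n => (x.1 n).2, x.2⟩) n⟩
  left_inv t := funext fun n => Subtype.ext (bodyToCube_cubeToBody hp (fun n => (t n).2) n)
  right_inv x := Subtype.ext <| funext fun n => Subtype.ext <|
    cubeToBody_bodyToCube hp (forall_mem_Icc_envs_iff.2 ⟨fun n => (x.1 n).2, x.2⟩) n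

variable (p) in
noncomputable def cubeHomeomorph (hp : StrictTriangle p) : (ℕ → unitInterval) ≃ₜ lipschitzBody p :=
  have : CompactSpace (lipschitzBody p) :=
    isCompact_iff_compactSpace.1 isClosed_lipschitzBody.isCompact
  Continuous.homeoOfEquivCompactToT2 (f := cubeEquiv p hp) <|
    (continuous_pi fun n => (continuous_cubeToBody n).subtype_mk _).subtype_mk _

end LipschitzBody

section McShane

variable {M : Type*} [PseudoMetricSpace M] {p : ℕ → M}

variable (p) in
/-- McShane's extension to `M` of the function `p j ↦ x j`. -/
noncomputable def mcShane (x : ℕ → unitInterval) (z : M) : ℝ := ⨅ j, (x j : ℝ) + dist z (p j)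

variable (p) in
theorem mcShane_le (x : ℕ → unitInterval) (z : M) (j : ℕ) : mcShane p x z ≤ x j + dist z (p j) :=
  ciInf_le ⟨0, by rintro _ ⟨j, rfl⟩; exact add_nonneg (x j).2.1 dist_nonneg⟩ j

variable (p) in
theorem mcShane_nonneg (x : ℕ → unitInterval) (z : M) : 0 ≤ mcShane p x z :=
  le_ciInf fun j => add_nonneg (x j).2.1 dist_nonneg

theorem sub_le_mcShane {x : ℕ → unitInterval} (hx : x ∈ lipschitzBody p) (z : M) (i : ℕ) :
    x i - dist z (p i) ≤ mcShane p x z :=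
  le_ciInf fun j => by linarith [(abs_sub_le_iff.1 (hx i j)).1, dist_triangle_left (p i) (p j) z]

theorem abs_mcShane_sub_le {x : ℕ → unitInterval} (hx : x ∈ lipschitzBody p) (z : M) (j : ℕ) :
    |mcShane p x z - x j| ≤ dist z (p j) :=
  abs_sub_le_iff.2 ⟨by linarith [mcShane_le p x z j], by linarith [sub_le_mcShane hx z j]⟩

theorem mcShane_apply {x : ℕ → unitInterval} (hx : x ∈ lipschitzBody p) (i : ℕ) :
    mcShane p x (p i) = x i :=
  eq_of_abs_sub_nonpos ((abs_mcShane_sub_le hx (p i) i).trans_eq (dist_self _))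

theorem mcShane_le_one (hp : DenseRange p) (x : ℕ → unitInterval) (z : M) : mcShane p x z ≤ 1 :=
  le_of_forall_pos_le_add fun ε hε => by
    obtain ⟨j, hj⟩ := hp.exists_dist_lt z hε
    linarith [mcShane_le p x z j, (x j).2.2]

theorem lipschitzWith_mcShane (x : ℕ → unitInterval) : LipschitzWith 1 (mcShane p x) :=
  LipschitzWith.of_le_add fun z w => sub_le_iff_le_add.1 <|
    le_ciInf fun j => by linarith [mcShane_le p x z j, dist_triangle z w (p j)]

theorem mcShane_eq_of_lipschitzWith (hp : DenseRange p) {f : M → ℝ} (hf : LipschitzWith 1 f)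
    {x : ℕ → unitInterval} (hx : ∀ j, (x j : ℝ) = f (p j)) (z : M) : mcShane p x z = f z := by
  have hf' : ∀ z w, f z ≤ f w + dist z w := fun z w => by
    linarith [(abs_sub_le_iff.1 (by simpa [Real.dist_eq] using hf.dist_le_mul z w)).1]
  refine le_antisymm (le_of_forall_pos_le_add fun ε hε => ?_) (le_ciInf fun j => hx j ▸ hf' z (p j))
  obtain ⟨j, hj⟩ := hp.exists_dist_lt z (half_pos hε)
  linarith [mcShane_le p x z j, hx j, hf' (p j) z, dist_comm z (p j)]

theorem continuous_mcShane (hp : DenseRange p) (z : M) :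
    Continuous fun x : lipschitzBody p => mcShane p x z := by
  refine continuous_iff_continuousAt.2 fun x₀ => Metric.tendsto_nhds.2 fun ε hε => ?_
  obtain ⟨j, hj⟩ := hp.exists_dist_lt z (by positivity : 0 < ε / 3)
  have hcoord : Continuous fun x : lipschitzBody p => (x.1 j : ℝ) :=
    continuous_subtype_val.comp ((continuous_apply j).comp continuous_subtype_val)
  filter_upwards [Metric.tendsto_nhds.1 hcoord.continuousAt (ε / 3) (by positivity)] with x hx
  have h := abs_mcShane_sub_le x.2 z j
  have h₀ := abs_mcShane_sub_le x₀.2 z j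
  rw [Real.dist_eq, abs_sub_lt_iff] at hx ⊢
  rw [abs_le] at h h₀
  constructor <;> linarith

end McShane

section Representation

variable {Γ M : Type*} [Group Γ] [PseudoMetricSpace M] [MulAction Γ M] [IsIsometricSMul Γ M]
  {p : ℕ → M}

variable (p) in
/-- `g` acts on McShane extensions by `f ↦ f ∘ (g⁻¹ • ·)`. -/
noncomputable def bodySMul (hp : DenseRange p) (g : Γ) (x : lipschitzBody p) : lipschitzBody p :=
  ⟨fun i => ⟨mcShane p x (g⁻¹ • p i), mcShane_nonneg p x _, mcShane_le_one hp x _⟩, fun i j => by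
    simpa [Real.dist_eq] using
      (lipschitzWith_mcShane (p := p) x).dist_le_mul (g⁻¹ • p i) (g⁻¹ • p j)⟩

theorem mcShane_bodySMul (hp : DenseRange p) (g : Γ) (x : lipschitzBody p) (z : M) :
    mcShane p (bodySMul p hp g x) z = mcShane p x (g⁻¹ • z) :=
  mcShane_eq_of_lipschitzWith hp
    (by simpa using (lipschitzWith_mcShane (p := p) x.1).comp (isometry_smul M g⁻¹).lipschitz)
    (fun _ => rfl) z

theorem bodySMul_one (hp : DenseRange p) (x : lipschitzBody p) : bodySMul p hp (1 : Γ) x = x :=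
  Subtype.ext <| funext fun i => Subtype.ext <| by simp [bodySMul, mcShane_apply x.2]

theorem bodySMul_mul (hp : DenseRange p) (g h : Γ) (x : lipschitzBody p) :
    bodySMul p hp (g * h) x = bodySMul p hp g (bodySMul p hp h x) :=
  Subtype.ext <| funext fun i => Subtype.ext <| by
    show mcShane p x ((g * h)⁻¹ • p i) = mcShane p (bodySMul p hp h x) (g⁻¹ • p i)
    rw [mcShane_bodySMul, mul_inv_rev, mul_smul]

theorem continuous_bodySMul (hp : DenseRange p) (g : Γ) : Continuous (bodySMul p hp g) :=
  (continuous_pi fun _ => (continuous_mcShane hp _).subtype_mk _).subtype_mk _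

variable (p) in
noncomputable def bodyRep (hp : DenseRange p) : Γ →* (lipschitzBody p ≃ₜ lipschitzBody p) where
  toFun g :=
    { toFun := bodySMul p hp g
      invFun := bodySMul p hp g⁻¹
      left_inv x := by rw [← bodySMul_mul, inv_mul_cancel, bodySMul_one]
      right_inv x := by rw [← bodySMul_mul, mul_inv_cancel, bodySMul_one]
      continuous_toFun := continuous_bodySMul hp g
      continuous_invFun := continuous_bodySMul hp g⁻¹ }
  map_one' := Homeomorph.ext (bodySMul_one hp)
  map_mul' g h := Homeomorph.ext (bodySMul_mul hp g h)

theorem mcShane_bodyRep (hp : DenseRange p) (g : Γ) (x : lipschitzBody p) (z : M) :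
    mcShane p (bodyRep p hp g x) z = mcShane p x (g⁻¹ • z) :=
  mcShane_bodySMul hp g x z

end Representation

def homeomorphConj {X Y : Type*} [TopologicalSpace X] [TopologicalSpace Y] (e : X ≃ₜ Y) :
    (Y ≃ₜ Y) →* (X ≃ₜ X) where
  toFun f := (e.trans f).trans e.symm
  map_one' := Homeomorph.ext e.symm_apply_apply
  map_mul' f g := Homeomorph.ext fun x => by
    show e.symm (f (g (e x))) = e.symm (f (e (e.symm (g (e x)))))
    rw [e.apply_symm_apply]

structure KakutaniSeq (H : Type*) [Group H] [TopologicalSpace H] where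
  set : ℕ → Set H
  set_zero : set 0 = univ
  set_mem_nhds : ∀ n, set n ∈ 𝓝 (1 : H)
  inv_mem : ∀ n a, a ∈ set n → a⁻¹ ∈ set n
  mul_mem : ∀ n a b c, a ∈ set (n + 1) → b ∈ set (n + 1) → c ∈ set (n + 1) → a * b * c ∈ set n

namespace KakutaniSeq

variable {H : Type*} [Group H] [TopologicalSpace H] (V : KakutaniSeq H)

theorem exists_set_one_subset [IsTopologicalGroup H] {U : Set H} (hU : U ∈ 𝓝 (1 : H)) :
    ∃ V : KakutaniSeq H, V.set 1 ⊆ U := by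
  have hroot : ∀ W : {W : Set H // W ∈ 𝓝 (1 : H)}, ∃ R : {R : Set H // R ∈ 𝓝 (1 : H)},
      (∀ a ∈ R.1, a⁻¹ ∈ R.1) ∧ ∀ a ∈ R.1, ∀ b ∈ R.1, ∀ c ∈ R.1, a * b * c ∈ W.1 ∩ U := by
    intro W
    obtain ⟨R, hR, hmul⟩ := exists_nhds_one_split4 (inter_mem W.2 hU)
    refine ⟨⟨R ∩ R⁻¹, inter_mem hR (inv_mem_nhds_one H hR)⟩, fun a ha => ⟨ha.2, ?_⟩,
      fun a ha b hb c hc => ?_⟩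
    · simpa using ha.1
    · simpa using hmul ha.1 hb.1 hc.1 (mem_of_mem_nhds hR)
  choose root hroot_inv hroot_mul using hroot
  let seq : ℕ → {W : Set H // W ∈ 𝓝 (1 : H)} := fun n =>
    Nat.rec (motive := fun _ => {W : Set H // W ∈ 𝓝 (1 : H)}) ⟨univ, univ_mem⟩ (fun _ W => root W) n
  refine ⟨⟨fun n => (seq n).1, rfl, fun n => (seq n).2, ?_, ?_⟩, ?_⟩
  · rintro (_ | n) a ha
    · trivial
    · exact hroot_inv _ a ha
  · intro n a b c ha hb hc
    exact (hroot_mul (seq n) a ha b hb c hc).1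
  · intro a ha
    have h1 : (1 : H) ∈ (seq 1).1 := mem_of_mem_nhds (seq 1).2
    simpa using (hroot_mul (seq 0) a ha 1 h1 1 h1).2

theorem one_mem (n : ℕ) : (1 : H) ∈ V.set n := mem_of_mem_nhds (V.set_mem_nhds n)

theorem set_antitone : Antitone V.set :=
  antitone_nat_of_succ_le fun n a ha => by
    simpa using V.mul_mem n a 1 1 ha (V.one_mem _) (V.one_mem _)

/-- `2⁻¹ ^ n` for the largest `n` with `a ∈ V.set n`, and `0` if `a` lies in every `V.set n`. -/
noncomputable def weight (a : H) : ℝ≥0 := ⨅ n : {n // a ∈ V.set n}, 2⁻¹ ^ (n : ℕ)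

instance (a : H) : Nonempty {n // a ∈ V.set n} := ⟨⟨0, by simp [V.set_zero]⟩⟩

variable {V}

theorem weight_le {a : H} {n : ℕ} (h : a ∈ V.set n) : V.weight a ≤ 2⁻¹ ^ n :=
  ciInf_le (OrderBot.bddBelow _) (⟨n, h⟩ : {n // a ∈ V.set n})

theorem weight_le_one (a : H) : V.weight a ≤ 1 := by
  simpa using weight_le (a := a) (n := 0) (by simp [V.set_zero])

theorem weight_le_weight {a b : H} (h : ∀ n, a ∈ V.set n → b ∈ V.set n) :
    V.weight b ≤ V.weight a :=
  le_ciInf fun n => weight_le (h n n.2)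

theorem mem_of_weight_lt {a : H} {n : ℕ} (h : V.weight a < 2⁻¹ ^ n) : a ∈ V.set (n + 1) := by
  obtain ⟨⟨m, hm⟩, hlt⟩ := exists_lt_of_ciInf_lt h
  exact V.set_antitone ((pow_lt_pow_iff_right_of_lt_one₀ (by norm_num) (by norm_num)).1 hlt) hm

theorem weight_one : V.weight 1 = 0 :=
  le_antisymm (ge_of_tendsto' (NNReal.tendsto_pow_atTop_nhds_zero_of_lt_one (by norm_num))
    fun n => weight_le (V.one_mem n)) bot_le

theorem weight_inv (a : H) : V.weight a⁻¹ = V.weight a :=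
  le_antisymm (weight_le_weight fun n => V.inv_mem n a)
    (weight_le_weight fun n h => by simpa using V.inv_mem n a⁻¹ h)

theorem weight_eq_one {a : H} (h : a ∉ V.set 1) : V.weight a = 1 :=
  le_antisymm (weight_le_one a) (not_lt.1 fun hlt => h (mem_of_weight_lt (n := 0) (by simpa)))

theorem weight_mul_mul_le (a b c : H) :
    V.weight (a * b * c) ≤ 2 * max (V.weight a) (max (V.weight b) (V.weight c)) := by
  by_contra! hlt
  obtain ⟨n, hn, hn'⟩ := exists_nat_pow_near_of_lt_one (bot_le.trans_lt hlt) (weight_le_one _)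
    (by norm_num : (0 : ℝ≥0) < 2⁻¹) (by norm_num)
  have hmax : max (V.weight a) (max (V.weight b) (V.weight c)) < 2⁻¹ ^ (n + 1) := by
    have : (2 : ℝ≥0) * 2⁻¹ ^ (n + 1) = 2⁻¹ ^ n := by
      rw [pow_succ, mul_comm, mul_assoc, inv_mul_cancel₀ two_ne_zero, mul_one]
    exact lt_of_mul_lt_mul_left (hlt.trans_le (hn'.trans_eq this.symm)) bot_le
  simp only [max_lt_iff] at hmax
  have habc := V.mul_mem (n + 1) a b c (mem_of_weight_lt hmax.1) (mem_of_weight_lt hmax.2.1)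
    (mem_of_weight_lt hmax.2.2)
  exact (weight_le habc).not_gt hn

variable (V) in
/-- The largest pseudometric below `(x, y) ↦ weight (x * y⁻¹)`. -/
noncomputable def chainMetric : PseudoMetricSpace H :=
  PseudoMetricSpace.ofPreNNDist (fun x y => V.weight (x * y⁻¹)) (fun x => by simp [weight_one])
    (fun x y => by rw [← weight_inv, mul_inv_rev, inv_inv])

theorem chainMetric_dist_mul_right (x y h : H) :
    V.chainMetric.dist (x * h) (y * h) = V.chainMetric.dist x y := by
  unfold chainMetric
  rw [PseudoMetricSpace.dist_ofPreNNDist, PseudoMetricSpace.dist_ofPreNNDist]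
  congr 1
  refine (Function.Surjective.iInf_congr (fun l => l.map (· * h))
    (List.map_surjective_iff.2 fun a => ⟨a * h⁻¹, by simp⟩) fun l => ?_).symm
  rw [← List.map_cons (f := (· * h)), ← List.map_singleton (f := (· * h)) (a := y),
    ← List.map_append, List.zipWith_map]
  simp [mul_assoc]

variable (V) in
noncomputable def seminorm : GroupSeminorm H where
  toFun a := V.chainMetric.dist a 1
  map_one' := @dist_self H V.chainMetric 1
  mul_le' a b := by
    let := V.chainMetric
    calc dist (a * b) 1 ≤ dist (a * b) b + dist b 1 := dist_triangle _ _ _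
      _ = dist a 1 + dist b 1 := by rw [← chainMetric_dist_mul_right a 1 b, one_mul]
  inv' a := by
    let := V.chainMetric
    rw [← chainMetric_dist_mul_right a⁻¹ 1 a, inv_mul_cancel, one_mul, dist_comm]

theorem seminorm_le_weight (a : H) : V.seminorm a ≤ V.weight a := by
  show V.chainMetric.dist a 1 ≤ _
  unfold chainMetric
  exact (PseudoMetricSpace.dist_ofPreNNDist_le _ _ _ a 1).trans_eq (by simp)

theorem weight_le_two_mul_seminorm (a : H) : (V.weight a : ℝ) ≤ 2 * V.seminorm a := by
  show _ ≤ 2 * V.chainMetric.dist a 1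
  unfold chainMetric
  refine le_of_eq_of_le (by simp) (PseudoMetricSpace.le_two_mul_dist_ofPreNNDist _ _ _
    (fun x₁ x₂ x₃ x₄ => ?_) a 1)
  simpa [mul_assoc] using weight_mul_mul_le (V := V) (x₁ * x₂⁻¹) (x₂ * x₃⁻¹) (x₃ * x₄⁻¹)

end KakutaniSeq

/-- Birkhoff–Kakutani. -/
theorem exists_groupSeminorm_of_mem_nhds_one {H : Type*} [Group H] [TopologicalSpace H]
    [IsTopologicalGroup H] {U : Set H} (hU : U ∈ 𝓝 (1 : H)) :
    ∃ N : GroupSeminorm H, Tendsto N (𝓝 1) (𝓝 0) ∧ ∀ a ∉ U, 1 / 2 ≤ N a := by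
  obtain ⟨V, hV⟩ := KakutaniSeq.exists_set_one_subset hU
  refine ⟨V.seminorm, tendsto_order.2
    ⟨fun b hb => .of_forall fun a => hb.trans_le (apply_nonneg _ a), fun ε hε => ?_⟩,
    fun a ha => ?_⟩
  · obtain ⟨n, hn⟩ := exists_pow_lt_of_lt_one hε (by norm_num : (2⁻¹ : ℝ) < 1)
    filter_upwards [V.set_mem_nhds n] with a ha
    exact ((V.seminorm_le_weight a).trans (mod_cast KakutaniSeq.weight_le ha)).trans_lt hn
  · have := V.weight_le_two_mul_seminorm a
    rw [KakutaniSeq.weight_eq_one fun h => ha (hV h), NNReal.coe_one] at this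
    linarith

theorem sqrt_le_sqrt_add_sqrt {a b c : ℝ} (ha : 0 ≤ a) (hb : 0 ≤ b) (hc : c ≤ a + b) :
    √c ≤ √a + √b := by
  refine Real.sqrt_le_iff.2 ⟨by positivity, ?_⟩
  nlinarith [Real.sq_sqrt ha, Real.sq_sqrt hb, Real.sqrt_nonneg a, Real.sqrt_nonneg b]

theorem sqrt_lt_sqrt_add_sqrt {a b c : ℝ} (ha : 0 < a) (hb : 0 < b) (hc : c ≤ a + b) :
    √c < √a + √b := by
  have := Real.sqrt_pos.2 ha
  have := Real.sqrt_pos.2 hb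
  refine (Real.sqrt_lt' (by positivity)).2 ?_
  nlinarith [Real.sq_sqrt ha.le, Real.sq_sqrt hb.le]

theorem exists_countable_dense_pairwise_dist_pos (X : Type*) [PseudoMetricSpace X]
    [TopologicalSpace.SeparableSpace X] :
    ∃ S : Set X, S.Countable ∧ Dense S ∧ S.Pairwise fun a b => 0 < dist a b := by
  obtain ⟨D, hDc, hD⟩ := TopologicalSpace.exists_countable_dense X
  let r := Function.surjInv (SeparationQuotient.surjective_mk (X := X))
  have hr : ∀ q, SeparationQuotient.mk (r q) = q := Function.surjInv_eq _
  have hdist : ∀ x, dist (r (SeparationQuotient.mk x)) x = 0 := fun x =>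
    Metric.inseparable_iff.1 (SeparationQuotient.mk_eq_mk.1 (hr _))
  refine ⟨r '' (SeparationQuotient.mk '' D), (hDc.image _).image _, ?_, ?_⟩
  · refine Metric.dense_iff.2 fun x ε hε => ?_
    obtain ⟨d, hd, hdD⟩ := Metric.dense_iff.1 hD x ε hε
    refine ⟨r (SeparationQuotient.mk d), ?_, mem_image_of_mem _ (mem_image_of_mem _ hdD)⟩
    rw [Metric.mem_ball] at hd ⊢
    linarith [dist_triangle (r (SeparationQuotient.mk d)) d x, hdist d]
  · rintro _ ⟨q, -, rfl⟩ _ ⟨q', -, rfl⟩ hne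
    refine dist_nonneg.lt_of_ne' fun h => hne (congrArg r ?_)
    rw [← hr q, ← hr q', SeparationQuotient.mk_eq_mk.2 (Metric.inseparable_iff.2 h)]

section Fibers

variable {H : Type*} [Group H]

/-- The square root makes the triangle inequality strict between points at positive distance. -/
noncomputable def snowflakeDist (N : GroupSeminorm H) (x y : H) : ℝ := √(min 1 (N (x * y⁻¹)))

variable {N : GroupSeminorm H}

theorem snowflakeDist_le_one (x y : H) : snowflakeDist N x y ≤ 1 :=
  Real.sqrt_le_one.2 (min_le_left _ _)

theorem snowflakeDist_self (x : H) : snowflakeDist N x x = 0 := by simp [snowflakeDist]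

theorem snowflakeDist_comm (x y : H) : snowflakeDist N x y = snowflakeDist N y x := by
  rw [snowflakeDist, ← map_inv_eq_map N, mul_inv_rev, inv_inv, snowflakeDist]

theorem snowflakeDist_mul_right (x y h : H) :
    snowflakeDist N (x * h) (y * h) = snowflakeDist N x y := by
  simp [snowflakeDist, mul_assoc]

theorem min_one_map_mul_inv_le (x y z : H) :
    min 1 (N (x * z⁻¹)) ≤ min 1 (N (x * y⁻¹)) + min 1 (N (y * z⁻¹)) := by
  have := map_mul_le_add N (x * y⁻¹) (y * z⁻¹)
  simp only [mul_assoc, inv_mul_cancel_left] at this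
  have := apply_nonneg N (x * y⁻¹)
  have := apply_nonneg N (y * z⁻¹)
  rcases le_total 1 (N (x * y⁻¹)) with h | h <;> rcases le_total 1 (N (y * z⁻¹)) with h' | h' <;>
    simp only [min_eq_left, min_eq_right, h, h'] <;>
    linarith [min_le_left 1 (N (x * z⁻¹)), min_le_right 1 (N (x * z⁻¹))]

theorem snowflakeDist_triangle (x y z : H) :
    snowflakeDist N x z ≤ snowflakeDist N x y + snowflakeDist N y z :=
  sqrt_le_sqrt_add_sqrt (by positivity) (by positivity) (min_one_map_mul_inv_le x y z)

theorem snowflakeDist_lt (x y z : H) (hxy : 0 < snowflakeDist N x y)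
    (hyz : 0 < snowflakeDist N y z) :
    snowflakeDist N x z < snowflakeDist N x y + snowflakeDist N y z :=
  sqrt_lt_sqrt_add_sqrt (Real.sqrt_pos.1 hxy) (Real.sqrt_pos.1 hyz) (min_one_map_mul_inv_le x y z)

/-- Countably many copies of `(H, snowflakeDist N)` at mutual distance `1`; having infinitely many
copies makes every dense subset infinite. -/
structure FiberSpace (N : GroupSeminorm H) where
  point : H
  fiber : ℕ

namespace FiberSpace

noncomputable instance : PseudoMetricSpace (FiberSpace N) where
  dist a b := if a.fiber = b.fiber then snowflakeDist N a.point b.point else 1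
  dist_self a := by simp [snowflakeDist_self]
  dist_comm a b := by
    by_cases h : a.fiber = b.fiber
    · simp [h, snowflakeDist_comm]
    · simp [h, Ne.symm h]
  dist_triangle a b c := by
    have := snowflakeDist_le_one (N := N) a.point c.point
    have := snowflakeDist_triangle (N := N) a.point b.point c.point
    have := Real.sqrt_nonneg (min 1 (N (a.point * b.point⁻¹)))
    have := Real.sqrt_nonneg (min 1 (N (b.point * c.point⁻¹)))
    simp only [snowflakeDist] at *
    split_ifs <;> first | linarith | omega

theorem dist_def (a b : FiberSpace N) :
    dist a b = if a.fiber = b.fiber then snowflakeDist N a.point b.point else 1 := rfl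

theorem dist_le_one (a b : FiberSpace N) : dist a b ≤ 1 := by
  rw [dist_def]; split_ifs <;> simp [snowflakeDist_le_one]

theorem dist_lt_dist_add_dist {a b c : FiberSpace N} (hab : 0 < dist a b) (hbc : 0 < dist b c) :
    dist a c < dist a b + dist b c := by
  have := snowflakeDist_le_one (N := N) a.point c.point
  simp only [dist_def] at hab hbc ⊢
  split_ifs at hab hbc ⊢ <;> first
    | exact snowflakeDist_lt _ _ _ hab hbc | linarith | omega

instance : MulAction H (FiberSpace N) where
  smul h a := ⟨a.point * h⁻¹, a.fiber⟩
  one_smul := fun ⟨x, n⟩ => by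
    show (⟨x * 1⁻¹, n⟩ : FiberSpace N) = ⟨x, n⟩
    simp
  mul_smul g h := fun ⟨x, n⟩ => by
    show (⟨x * (g * h)⁻¹, n⟩ : FiberSpace N) = ⟨x * h⁻¹ * g⁻¹, n⟩
    simp [mul_assoc]

theorem smul_def (h : H) (a : FiberSpace N) : h • a = ⟨a.point * h⁻¹, a.fiber⟩ := rfl

instance : IsIsometricSMul H (FiberSpace N) :=
  ⟨fun h => Isometry.of_dist_eq fun a b => by simp [dist_def, smul_def, snowflakeDist_mul_right]⟩

variable [TopologicalSpace H] [ContinuousMul H]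

theorem continuous_mk (hN : Tendsto N (𝓝 1) (𝓝 0)) :
    Continuous fun q : H × ℕ => (⟨q.1, q.2⟩ : FiberSpace N) := by
  refine continuous_iff_continuousAt.2 fun q₀ => Metric.tendsto_nhds.2 fun ε hε => ?_
  have hmul : Tendsto (fun q : H × ℕ => q.1 * q₀.1⁻¹) (𝓝 q₀) (𝓝 1) :=
    (show Continuous fun q : H × ℕ => q.1 * q₀.1⁻¹ by fun_prop).tendsto' q₀ 1 (mul_inv_cancel _)
  have hsnow : Tendsto (fun q : H × ℕ => snowflakeDist N q.1 q₀.1) (𝓝 q₀) (𝓝 0) :=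
    ((show Continuous fun t : ℝ => √(min 1 t) by fun_prop).tendsto' 0 0 (by simp)).comp
      (hN.comp hmul)
  filter_upwards [hsnow (Iio_mem_nhds hε),
    continuous_snd.continuousAt (isOpen_discrete {q₀.2} |>.mem_nhds rfl)] with q hq hq'
  simpa [dist_def, show q.2 = q₀.2 from hq'] using hq

theorem separableSpace [TopologicalSpace.SeparableSpace H] (hN : Tendsto N (𝓝 1) (𝓝 0)) :
    TopologicalSpace.SeparableSpace (FiberSpace N) :=
  Function.Surjective.denseRange (f := fun q : H × ℕ => (⟨q.1, q.2⟩ : FiberSpace N))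
    (fun a => ⟨(a.point, a.fiber), rfl⟩) |>.separableSpace (continuous_mk hN)

theorem exists_denseRange_strictTriangle [TopologicalSpace.SeparableSpace H]
    (hN : Tendsto N (𝓝 1) (𝓝 0)) : ∃ p : ℕ → FiberSpace N, DenseRange p ∧ StrictTriangle p := by
  have := separableSpace hN
  obtain ⟨S, hSc, hSd, hSpos⟩ := exists_countable_dense_pairwise_dist_pos (FiberSpace N)
  have hfiber : fiber '' S = univ := eq_univ_of_forall fun n => by
    obtain ⟨a, ha, haS⟩ := Metric.dense_iff.1 hSd ⟨1, n⟩ 1 one_pos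
    refine ⟨a, haS, by_contra fun hne => ?_⟩
    simp [Metric.mem_ball, dist_def, hne] at ha
  have : Countable S := hSc.to_subtype
  have : Infinite S := (Set.Infinite.of_image fiber (hfiber ▸ infinite_univ)).to_subtype
  have : Denumerable S := (nonempty_denumerable S).some
  let e := (Denumerable.eqv S).symm
  have hne : ∀ {i j}, i ≠ j → (e i : FiberSpace N) ≠ e j := fun hij h =>
    hij (e.injective (Subtype.ext h))
  refine ⟨Subtype.val ∘ e, ?_, fun i j k hij hjk _ => ?_⟩
  · rwa [DenseRange, range_comp, e.range_eq_univ, image_univ, Subtype.range_coe]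
  · exact dist_lt_dist_add_dist (hSpos (e i).2 (e j).2 (hne hij)) (hSpos (e j).2 (e k).2 (hne hjk))

end FiberSpace

end Fibers

theorem exists_hilbertCubeRep_separating {H : Type*} [Group H] [TopologicalSpace H]
    [IsTopologicalGroup H] [TopologicalSpace.SeparableSpace H] {U : Set H} (hU : U ∈ 𝓝 (1 : H)) :
    ∃ (Φ : H →* ((ℕ → unitInterval) ≃ₜ (ℕ → unitInterval))) (x₀ : ℕ → unitInterval),
      ∃ W ∈ 𝓝 x₀, ∀ h, Φ h x₀ ∈ W → h ∈ U := by
  obtain ⟨N, hN, hNU⟩ := exists_groupSeminorm_of_mem_nhds_one hU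
  obtain ⟨p, hpd, hps⟩ := FiberSpace.exists_denseRange_strictTriangle hN
  let Θ := cubeHomeomorph p hps
  let Φ := (homeomorphConj Θ).comp (bodyRep (Γ := H) p hpd)
  let z₀ : FiberSpace N := ⟨1, 0⟩
  let y₀ : lipschitzBody p := ⟨fun j => ⟨dist (p j) z₀, dist_nonneg, FiberSpace.dist_le_one _ _⟩,
    fun i j => abs_dist_sub_le (p i) (p j) z₀⟩
  let E : (ℕ → unitInterval) → ℝ := fun x => mcShane p (Θ x) z₀
  have hE : ∀ h, E (Φ h (Θ.symm y₀)) = √(min 1 (N h)) := fun h => by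
    show mcShane p (Θ (Θ.symm (bodyRep p hpd h (Θ (Θ.symm y₀))))) z₀ = _
    rw [Θ.apply_symm_apply, Θ.apply_symm_apply, mcShane_bodyRep,
      mcShane_eq_of_lipschitzWith hpd (LipschitzWith.dist_left z₀) fun j => rfl]
    simp [z₀, FiberSpace.dist_def, FiberSpace.smul_def, snowflakeDist]
  refine ⟨Φ, Θ.symm y₀, E ⁻¹' Iio √(1 / 2), ?_, fun h hh => ?_⟩
  · have hEcont : Continuous E := (continuous_mcShane hpd z₀).comp Θ.continuous
    have hE₀ : E (Θ.symm y₀) = 0 := by simpa using hE 1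
    exact hEcont.continuousAt.preimage_mem_nhds (Iio_mem_nhds (hE₀ ▸ by positivity))
  · by_contra hhU
    simp only [mem_preimage, hE, mem_Iio] at hh
    exact hh.not_ge (Real.sqrt_le_sqrt (le_min (by norm_num) (hNU h hhU)))

end HilbertCubeRep

theorem continuous_hilbertCubeHomeoTop_eval (x : ℕ → unitInterval) :
    @Continuous _ _ hilbertCubeHomeoTop _ fun g : (ℕ → unitInterval) ≃ₜ (ℕ → unitInterval) => g x :=
  @Continuous.comp _ C(ℕ → unitInterval, ℕ → unitInterval) _ hilbertCubeHomeoTop _ _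
    (fun g => g) _ (continuous_eval_const x) continuous_induced_dom

/-- If every homomorphism from `G` into `Homeo([0,1]^ℕ)` with the compact-open
topology is continuous, then every homomorphism from `G` into a separable
topological group is continuous. -/
theorem continuity_into_hilbert_cube_homeos_suffices (G : Type*) [Group G]
    [TopologicalSpace G] [IsTopologicalGroup G]
    (hG : ∀ π : G →* ((ℕ → unitInterval) ≃ₜ (ℕ → unitInterval)),
      @Continuous _ _ _ hilbertCubeHomeoTop π)
    (H : Type*) [Group H] [TopologicalSpace H] [IsTopologicalGroup H]
    [TopologicalSpace.SeparableSpace H] (π : G →* H) :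
    Continuous π := by
  let := hilbertCubeHomeoTop
  refine continuous_of_continuousAt_one π fun U hU => ?_
  rw [map_one] at hU
  obtain ⟨Φ, x₀, W, hW, hWU⟩ := HilbertCubeRep.exists_hilbertCubeRep_separating hU
  have horbit : Continuous fun a => Φ (π a) x₀ :=
    (continuous_hilbertCubeHomeoTop_eval x₀).comp (hG (Φ.comp π))
  have hW' : W ∈ 𝓝 (Φ (π 1) x₀) := by simpa using hW
  exact mem_of_superset (horbit.continuousAt.preimage_mem_nhds hW') fun a ha => hWU _ ha
end

section
/- Let M be a manifold and let W ⊆ Homeo(M) be a symmetric countably syndetic subset witnessed by a covering Homeo(M) = ⋃_m k_m W. Suppose C ⊆ M is closed and (A_m) is a sequence of pairwise disjoint closed subsets of C such that for every sequence (g_m) of homeomorphisms with supp(g_m) ⊆ A_m there exists g ∈ Homeo(M) with supp(g) ⊆ C agreeing with g_m on A_m for all m. Then there exists m₀ such that every g ∈ Homeo(M) with supp(g) ⊆ A_{m₀} satisfies: there is h ∈ W² with supp(h) ⊆ C and g|A_{m₀} = h|A_{m₀}. -/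
/-!
Suppose no `A m₀` works, and pick for every `m` a homeomorphism `g m` supported in `A m` witnessing
this. For each `s ⊆ ℕ` glue the `g m` with `m ∈ s` to some `G s` supported in `C`. There are
uncountably many `s` but only countably many translates `k j • W`, so two distinct `s`, `t` give
`G s, G t` in the same translate; then `(G t)⁻¹ * G s ∈ W⁻¹ * W = W * W` is supported in `C` and
agrees with `g m` on `A m` for any `m ∈ s \ t`, a contradiction.
-/

open Pointwise Set Topology Function

lemma inv_mul_mem_mul_of_mem_smul {G : Type*} [Group G] {W : Set G} (hW : W⁻¹ = W)
    {k a b : G} (ha : a ∈ k • W) (hb : b ∈ k • W) : b⁻¹ * a ∈ W * W := by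
  obtain ⟨w, hw, rfl⟩ := ha
  obtain ⟨w', hw', rfl⟩ := hb
  have hcancel : (k • w')⁻¹ * (k • w) = w'⁻¹ * w := by simp [mul_assoc]
  rw [hcancel]
  exact mul_mem_mul (hW ▸ inv_mem_inv.mpr hw') hw

lemma exists_mem_notMem_of_map_nat (j : Set ℕ → ℕ) :
    ∃ s t : Set ℕ, ∃ m, j s = j t ∧ m ∈ s ∧ m ∉ t := by
  obtain ⟨s, t, hj, hst⟩ := not_injective_iff.mp (cantor_injective j)
  by_cases hsub : s ⊆ t
  · obtain ⟨m, ht, hs⟩ := not_subset.mp fun h => hst (hsub.antisymm h)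
    exact ⟨t, s, m, hj.symm, ht, hs⟩
  · obtain ⟨m, hs, ht⟩ := not_subset.mp hsub
    exact ⟨s, t, m, hj, hs, ht⟩

lemma Function.Injective.mapsTo_of_setOf_ne_subset {α : Type*} {f : α → α} (hf : Injective f)
    {A : Set α} (h : {x | f x ≠ x} ⊆ A) : MapsTo f A A := by
  intro x hx
  by_cases hfx : f x = x
  · rwa [hfx]
  · exact h (hf.ne hfx)

namespace Homeomorph

variable {X : Type*} [TopologicalSpace X]

@[simp]
lemma homeoGroup_mul_apply (f g : X ≃ₜ X) (x : X) : (f * g) x = f (g x) := rfl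

@[simp]
lemma homeoGroup_inv_apply (f : X ≃ₜ X) (x : X) : f⁻¹ x = f.symm x := rfl

@[simp]
lemma homeoGroup_one_apply (x : X) : (1 : X ≃ₜ X) x = x := rfl

lemma closure_setOf_inv_mul_apply_ne_subset (f g : X ≃ₜ X) :
    closure {x | (g⁻¹ * f) x ≠ x} ⊆ closure {x | f x ≠ x} ∪ closure {x | g x ≠ x} := by
  rw [← closure_union]
  refine closure_mono fun x hx => ?_
  by_contra h
  simp only [mem_union, mem_ofPred_eq, not_or, not_not] at h
  simp [h.1, g.symm_apply_eq.mpr h.2.symm] at hx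

lemma eqOn_inv_mul {f g φ : X ≃ₜ X} {A : Set X} (hφ : MapsTo φ A A) (hf : EqOn f φ A)
    (hg : EqOn g id A) : EqOn (⇑(g⁻¹ * f)) φ A := fun x hx => by
  rw [homeoGroup_mul_apply, hf hx, homeoGroup_inv_apply, g.symm_apply_eq]
  exact (hg (hφ hx)).symm

end Homeomorph

theorem syndetic_patching_general (M : Type*) [TopologicalSpace M]
    (W : Set (M ≃ₜ M)) (hsym : W⁻¹ = W)
    (k : ℕ → M ≃ₜ M) (hcov : (⋃ m, k m • W) = Set.univ)
    (C : Set M)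
    (A : ℕ → Set M)
    (hglue : ∀ g : ℕ → M ≃ₜ M, (∀ m, closure {x | g m x ≠ x} ⊆ A m) →
      ∃ G : M ≃ₜ M, closure {x | G x ≠ x} ⊆ C ∧ ∀ m, Set.EqOn (⇑G) (⇑(g m)) (A m)) :
    ∃ m₀ : ℕ, ∀ g : M ≃ₜ M, closure {x | g x ≠ x} ⊆ A m₀ →
      ∃ h ∈ W * W, closure {x | h x ≠ x} ⊆ C ∧ Set.EqOn (⇑g) (⇑h) (A m₀) := by
  by_contra! hbad
  choose g hg hbad using hbad
  have hsupp (s : Set ℕ) (m : ℕ) : closure {x | s.mulIndicator g m x ≠ x} ⊆ A m := by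
    by_cases hm : m ∈ s
    · simpa [hm] using hg m
    · simp [hm]
  choose G hGC hGA using fun s => hglue (s.mulIndicator g) (hsupp s)
  choose j hj using fun s => mem_iUnion.mp (hcov ▸ mem_univ (G s))
  obtain ⟨s, t, m, hjst, hs, ht⟩ := exists_mem_notMem_of_map_nat j
  have hgA : MapsTo (g m) (A m) (A m) :=
    (g m).injective.mapsTo_of_setOf_ne_subset (subset_closure.trans (hg m))
  refine hbad m ((G t)⁻¹ * G s) (inv_mul_mem_mul_of_mem_smul hsym (hj s) (hjst ▸ hj t))
    ((Homeomorph.closure_setOf_inv_mul_apply_ne_subset _ _).trans (union_subset (hGC s) (hGC t)))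
    (Homeomorph.eqOn_inv_mul hgA ?_ ?_).symm
  · simpa [hs] using hGA s m
  · exact fun x hx => by simpa [ht] using hGA t m hx

/-- If homeomorphisms supported on the pairwise disjoint closed sets `A m ⊆ C` can be
glued to one supported in `C`, then for some `m₀` every homeomorphism supported in
`A m₀` agrees on `A m₀` with some element of `W²` supported in `C`. -/
theorem syndetic_patching (n : ℕ) (M : Type*) [TopologicalSpace M] [T2Space M]
    [ChartedSpace (EuclideanSpace ℝ (Fin n)) M]
    (W : Set (M ≃ₜ M)) (hsym : W⁻¹ = W)
    (k : ℕ → M ≃ₜ M) (hcov : (⋃ m, k m • W) = Set.univ)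
    (C : Set M) (hC : IsClosed C)
    (A : ℕ → Set M) (hAC : ∀ m, A m ⊆ C) (hAcl : ∀ m, IsClosed (A m))
    (hdisj : Pairwise (Function.onFun Disjoint A))
    (hglue : ∀ g : ℕ → M ≃ₜ M, (∀ m, closure {x | g m x ≠ x} ⊆ A m) →
      ∃ G : M ≃ₜ M, closure {x | G x ≠ x} ⊆ C ∧ ∀ m, Set.EqOn (⇑G) (⇑(g m)) (A m)) :
    ∃ m₀ : ℕ, ∀ g : M ≃ₜ M, closure {x | g x ≠ x} ⊆ A m₀ →
      ∃ h ∈ W * W, closure {x | h x ≠ x} ⊆ C ∧ Set.EqOn (⇑g) (⇑h) (A m₀) :=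
  syndetic_patching_general M W hsym k hcov C A hglue
end

section
/- Let g₁, g₂ ∈ Homeo(X) be homeomorphisms of a topological space X, and suppose there are f₁, f₂ ∈ Homeo(X) such that supp(f₁) ∩ supp(f₂) ⊆ A for some set A, f₁ agrees with g₁ on A, f₂ agrees with g₂ on A, supp(g₁) ⊆ A and supp(g₂) ⊆ A. Then the commutator [f₁, f₂] = f₁f₂f₁⁻¹f₂⁻¹ equals the commutator [g₁, g₂]. -/
open Pointwise Set Topology

section Aux

variable {X : Type*} [TopologicalSpace X] {A : Set X} {f g : X ≃ₜ X} {x : X}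

lemma fix_of_not_mem_supp (hx : x ∉ closure {x | g x ≠ x}) : g x = x := by
  by_contra h
  exact hx (subset_closure h)

lemma symm_fix_of_not_mem_supp (hx : x ∉ closure {x | g x ≠ x}) : g.symm x = x := by
  conv_lhs => rw [← fix_of_not_mem_supp hx]
  exact g.symm_apply_apply x

lemma symm_mem_supp (hx : x ∈ closure {x | g x ≠ x}) :
    g.symm x ∈ closure {x | g x ≠ x} := by
  by_contra h
  have h1 : g (g.symm x) = g.symm x := fix_of_not_mem_supp h
  rw [g.apply_symm_apply] at h1
  rw [h1] at hx
  exact h hx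

lemma suppA_fix (hg : closure {x | g x ≠ x} ⊆ A) (hx : x ∉ A) : g x = x :=
  fix_of_not_mem_supp fun h => hx (hg h)

lemma suppA_symm_fix (hg : closure {x | g x ≠ x} ⊆ A) (hx : x ∉ A) : g.symm x = x :=
  symm_fix_of_not_mem_supp fun h => hx (hg h)

lemma memA_symm (hg : closure {x | g x ≠ x} ⊆ A) (hx : x ∈ A) : g.symm x ∈ A := by
  by_contra h
  have h1 : g (g.symm x) = g.symm x := suppA_fix hg h
  rw [g.apply_symm_apply] at h1
  rw [h1] at hx
  exact h hx

lemma memA_apply (hg : closure {x | g x ≠ x} ⊆ A) (hx : x ∈ A) : g x ∈ A := by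
  by_contra h
  have h1 : g (g x) = g x := suppA_fix hg h
  have h2 := g.injective h1
  rw [h2] at h
  exact h hx

lemma eq_symm_on_A (h : Set.EqOn (⇑f) (⇑g) A) (hg : closure {x | g x ≠ x} ⊆ A)
    (hx : x ∈ A) : f.symm x = g.symm x := by
  have hA : g.symm x ∈ A := memA_symm hg hx
  have hfx : f (g.symm x) = x := by rw [h hA, g.apply_symm_apply]
  calc f.symm x = f.symm (f (g.symm x)) := by rw [hfx]
    _ = g.symm x := f.symm_apply_apply _

end Aux

/-- If `f₁, f₂` agree with `g₁, g₂` on `A`, the common support of `f₁, f₂` lies in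
`A`, and `g₁, g₂` are supported in `A`, then `[f₁,f₂] = [g₁,g₂]`. -/
theorem commutator_localization (X : Type*) [TopologicalSpace X] (A : Set X)
    (g₁ g₂ f₁ f₂ : X ≃ₜ X)
    (hsupp : closure {x | f₁ x ≠ x} ∩ closure {x | f₂ x ≠ x} ⊆ A)
    (h₁ : Set.EqOn (⇑f₁) (⇑g₁) A) (h₂ : Set.EqOn (⇑f₂) (⇑g₂) A)
    (hg₁ : closure {x | g₁ x ≠ x} ⊆ A) (hg₂ : closure {x | g₂ x ≠ x} ⊆ A) :
    f₁ * f₂ * f₁⁻¹ * f₂⁻¹ = g₁ * g₂ * g₁⁻¹ * g₂⁻¹ := by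
  ext x
  show f₁ (f₂ (f₁.symm (f₂.symm x))) = g₁ (g₂ (g₁.symm (g₂.symm x)))
  by_cases hx : x ∈ A
  · -- everything stays in A, where f agrees with g
    have e2 : f₂.symm x = g₂.symm x := eq_symm_on_A h₂ hg₂ hx
    have m2 : g₂.symm x ∈ A := memA_symm hg₂ hx
    have e1 : f₁.symm (g₂.symm x) = g₁.symm (g₂.symm x) := eq_symm_on_A h₁ hg₁ m2
    have m1 : g₁.symm (g₂.symm x) ∈ A := memA_symm hg₁ m2
    rw [e2, e1, h₂ m1, h₁ (memA_apply hg₂ m1)]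
  · -- RHS is x
    have r : g₁ (g₂ (g₁.symm (g₂.symm x))) = x := by
      rw [suppA_symm_fix hg₂ hx, suppA_symm_fix hg₁ hx, suppA_fix hg₂ hx, suppA_fix hg₁ hx]
    rw [r]
    by_cases hx2 : x ∈ closure {y | f₂ y ≠ y}
    · -- then x ∉ supp f₁
      have hx1 : x ∉ closure {y | f₁ y ≠ y} := fun h => hx (hsupp ⟨h, hx2⟩)
      have hz2 : f₂.symm x ∈ closure {y | f₂ y ≠ y} := symm_mem_supp hx2
      have hzA : f₂.symm x ∉ A := by
        intro hA
        apply hx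
        have := memA_apply hg₂ hA
        rwa [← h₂ hA, f₂.apply_symm_apply] at this
      have hz1 : f₂.symm x ∉ closure {y | f₁ y ≠ y} := fun h => hzA (hsupp ⟨h, hz2⟩)
      rw [symm_fix_of_not_mem_supp hz1, f₂.apply_symm_apply,
        fix_of_not_mem_supp hx1]
    · -- x ∉ supp f₂
      rw [symm_fix_of_not_mem_supp hx2]
      by_cases hy2 : f₁.symm x ∈ closure {y | f₂ y ≠ y}
      · -- then f₁.symm x ∈ supp f₁, hence in A, contradiction
        have hy1 : f₁.symm x ∈ closure {y | f₁ y ≠ y} := by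
          by_contra h
          have h1 : f₁ (f₁.symm x) = f₁.symm x := fix_of_not_mem_supp h
          rw [f₁.apply_symm_apply] at h1
          rw [h1] at hx2
          exact hx2 hy2
        have hyA : f₁.symm x ∈ A := hsupp ⟨hy1, hy2⟩
        exact absurd (by
          have := memA_apply hg₁ hyA
          rwa [← h₁ hyA, f₁.apply_symm_apply] at this) hx
      · rw [fix_of_not_mem_supp hy2, f₁.apply_symm_apply]
end

section
/- Let h be a homeomorphism of ℝⁿ with compact support and (U_m)_{m∈ℤ} a sequence of pairwise disjoint open balls with h[U_m] = U_{m+1} for all m. Let g be a homeomorphism supported in U₀, and define f by f = hᵐ g h⁻ᵐ on U_m for m ≥ 0 and f = id elsewhere. Then f is a homeomorphism of ℝⁿ and g = f h f⁻¹ h⁻¹. -/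
open Pointwise Set Topology

/-!
The conjugates `hᵐ g h⁻ᵐ` (`m ≥ 0`) are supported in the pairwise disjoint balls `U m`, so
they can be glued into a bijection `f`. Since the balls shrink to `x₀`, only finitely many
of the pieces move a point by `ε` or more, and away from the closed supports of those
finitely many pieces `f` is `ε`-close to the identity; this makes `f` and its inverse
continuous. Conjugation by `h` moves the piece on `U m` onto `U (m + 1)`, so `f h` and `h f`
differ only by the piece `g` on `U 0`: `f h = g h f`.
-/

namespace Homeomorph

section Support

variable {X : Type*} [TopologicalSpace X]

lemma coe_mul (a b : X ≃ₜ X) : ⇑(a * b) = a ∘ b := rfl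

lemma mapsTo_of_support_subset {c : X ≃ₜ X} {s : Set X} (hs : {x | c x ≠ x} ⊆ s) :
    MapsTo c s s := by
  intro x hx
  by_contra hcx
  have hfix : c (c x) = c x := by_contra fun hne => hcx (hs hne)
  exact hcx ((c.injective hfix).symm ▸ hx)

lemma support_symm (c : X ≃ₜ X) : {x | c.symm x ≠ x} = {x | c x ≠ x} := by
  ext x
  simp only [mem_ofPred_eq, ne_eq, c.symm_apply_eq, eq_comm (a := x)]

lemma support_conj (a b : X ≃ₜ X) : {x | (a * b * a⁻¹) x ≠ x} = a '' {x | b x ≠ x} := by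
  ext x
  simp only [a.image_eq_preimage_symm, mem_preimage, mem_ofPred_eq, mul_apply, inv_apply, ne_eq,
    ← a.eq_symm_apply]

end Support

section Pieces

variable {X ι : Type*} [TopologicalSpace X] {U : ι → Set X}

open Classical in
noncomputable def pieceMap (U : ι → Set X) (c : ι → X ≃ₜ X) (x : X) : X :=
  if hx : ∃ i, x ∈ U i then c hx.choose x else x

lemma pieceMap_of_mem (hdisj : Pairwise (Function.onFun Disjoint U)) (c : ι → X ≃ₜ X)
    {i : ι} {x : X} (hx : x ∈ U i) : pieceMap U c x = c i x := by
  have hex : ∃ j, x ∈ U j := ⟨i, hx⟩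
  have hi : hex.choose = i := by
    by_contra hne
    exact disjoint_left.1 (hdisj hne) hex.choose_spec hx
  rw [pieceMap, dif_pos hex, hi]

lemma pieceMap_of_notMem (c : ι → X ≃ₜ X) {x : X} (hx : x ∉ ⋃ i, U i) :
    pieceMap U c x = x := by
  rw [pieceMap, dif_neg (by simpa using hx)]

lemma leftInverse_pieceMap (hdisj : Pairwise (Function.onFun Disjoint U)) {c : ι → X ≃ₜ X}
    (hc : ∀ i, {x | c i x ≠ x} ⊆ U i) :
    Function.LeftInverse (pieceMap U fun i => (c i).symm) (pieceMap U c) := by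
  intro x
  by_cases hx : x ∈ ⋃ i, U i
  · obtain ⟨i, hi⟩ := mem_iUnion.1 hx
    rw [pieceMap_of_mem hdisj c hi,
      pieceMap_of_mem hdisj _ (mapsTo_of_support_subset (hc i) hi), symm_apply_apply]
  · rw [pieceMap_of_notMem c hx, pieceMap_of_notMem _ hx]

lemma rightInverse_pieceMap (hdisj : Pairwise (Function.onFun Disjoint U)) {c : ι → X ≃ₜ X}
    (hc : ∀ i, {x | c i x ≠ x} ⊆ U i) :
    Function.RightInverse (pieceMap U fun i => (c i).symm) (pieceMap U c) :=
  leftInverse_pieceMap (c := fun i => (c i).symm) hdisj fun i =>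
    (support_symm (c i)).trans_subset (hc i)

end Pieces

section Gluing

variable {X ι : Type*} [PseudoMetricSpace X] {U : ι → Set X}

theorem continuous_pieceMap (hopen : ∀ i, IsOpen (U i))
    (hdisj : Pairwise (Function.onFun Disjoint U)) {c : ι → X ≃ₜ X}
    (hc : ∀ i, closure {x | c i x ≠ x} ⊆ U i)
    (hsmall : ∀ ε > 0, ∀ᶠ i in Filter.cofinite, ∀ x, dist (c i x) x < ε) :
    Continuous (pieceMap U c) := by
  refine continuous_iff_continuousAt.2 fun x => ?_
  by_cases hx : x ∈ ⋃ i, U i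
  · obtain ⟨i, hi⟩ := mem_iUnion.1 hx
    exact (c i).continuous.continuousAt.congr <| Filter.eventually_of_mem
      ((hopen i).mem_nhds hi) fun y hy => (pieceMap_of_mem hdisj c hy).symm
  rw [Metric.continuousAt_iff, pieceMap_of_notMem c hx]
  intro ε hε
  set S := {i | ¬∀ y, dist (c i y) y < ε / 2}
  set C := ⋃ i ∈ S, closure {y | c i y ≠ y}
  have hC : IsClosed C :=
    (Filter.eventually_cofinite.1 (hsmall _ (half_pos hε))).isClosed_biUnion
      fun _ _ => isClosed_closure
  have hxC : x ∉ C := by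
    simp only [C, mem_iUnion, not_exists] at hx ⊢
    exact fun i _ hi => hx i (hc i hi)
  have hmove : ∀ y ∉ C, dist (pieceMap U c y) y < ε / 2 := by
    intro y hy
    by_cases hyU : y ∈ ⋃ i, U i
    · obtain ⟨i, hi⟩ := mem_iUnion.1 hyU
      rw [pieceMap_of_mem hdisj c hi]
      by_cases hiS : i ∈ S
      · have hfix : c i y = y := by_contra fun hne => hy (mem_biUnion hiS (subset_closure hne))
        rw [hfix, dist_self]
        exact half_pos hε
      · exact not_not.1 hiS y
    · rw [pieceMap_of_notMem c hyU, dist_self]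
      exact half_pos hε
  obtain ⟨δ, hδ, hball⟩ := Metric.isOpen_iff.1 hC.isOpen_compl x hxC
  refine ⟨min δ (ε / 2), by positivity, fun y hy => ?_⟩
  calc dist (pieceMap U c y) x ≤ dist (pieceMap U c y) y + dist y x := dist_triangle _ _ _
    _ < ε / 2 + ε / 2 :=
      add_lt_add (hmove y (hball (hy.trans_le (min_le_left _ _)))) (hy.trans_le (min_le_right _ _))
    _ = ε := add_halves ε

theorem exists_eqOn_pieces (hopen : ∀ i, IsOpen (U i))
    (hdisj : Pairwise (Function.onFun Disjoint U)) {c : ι → X ≃ₜ X}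
    (hc : ∀ i, closure {x | c i x ≠ x} ⊆ U i)
    (hsmall : ∀ ε > 0, ∀ᶠ i in Filter.cofinite, ∀ x, dist (c i x) x < ε) :
    ∃ f : X ≃ₜ X, (∀ i, EqOn f (c i) (U i)) ∧ ∀ x ∉ ⋃ i, U i, f x = x := by
  have hc' : ∀ i, {x | c i x ≠ x} ⊆ U i := fun i => subset_closure.trans (hc i)
  have hsmall_symm : ∀ ε > 0, ∀ᶠ i in Filter.cofinite, ∀ x, dist ((c i).symm x) x < ε :=
    fun ε hε => (hsmall ε hε).mono fun i hi x => by
      simpa [dist_comm] using hi ((c i).symm x)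
  refine ⟨⟨⟨pieceMap U c, pieceMap U fun i => (c i).symm, leftInverse_pieceMap hdisj hc',
    rightInverse_pieceMap hdisj hc'⟩, continuous_pieceMap hopen hdisj hc hsmall,
    continuous_pieceMap hopen hdisj (fun i => (support_symm (c i)).symm ▸ hc i) hsmall_symm⟩,
    fun i x hx => pieceMap_of_mem hdisj c hx, fun x hx => pieceMap_of_notMem c hx⟩

end Gluing

lemma dist_apply_lt_of_support_subset_ball {X : Type*} [PseudoMetricSpace X] {c : X ≃ₜ X}
    {x₀ : X} {ε : ℝ} (hε : 0 < ε) (hs : {x | c x ≠ x} ⊆ Metric.ball x₀ (ε / 2)) (x : X) :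
    dist (c x) x < ε := by
  by_cases hx : c x = x
  · rwa [hx, dist_self]
  have hcx : dist (c x) x₀ < ε / 2 := mapsTo_of_support_subset hs (hs hx)
  have hx₀ : dist x x₀ < ε / 2 := hs hx
  linarith [dist_triangle_right (c x) x x₀]

section Shift

variable {X : Type*} [TopologicalSpace X] {h : X ≃ₜ X} {U : ℤ → Set X}

lemma apply_mem_succ_iff (hshift : ∀ m, h '' U m = U (m + 1)) {k : ℤ} {y : X} :
    h y ∈ U (k + 1) ↔ y ∈ U k := by
  rw [← hshift, h.injective.mem_set_image]

lemma image_pow_eq (hshift : ∀ m, h '' U m = U (m + 1)) (k : ℤ) (m : ℕ) :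
    ⇑(h ^ m) '' U k = U (k + m) := by
  induction m with
  | zero => rw [pow_zero, Nat.cast_zero, add_zero]; exact image_id _
  | succ m ih => rw [pow_succ', coe_mul, image_comp, ih, hshift, Nat.cast_succ, add_assoc]

lemma support_conj_pow_subset (hshift : ∀ m, h '' U m = U (m + 1)) {g : X ≃ₜ X}
    (hg : {x | g x ≠ x} ⊆ U 0) (m : ℕ) : {x | (h ^ m * g * (h ^ m)⁻¹) x ≠ x} ⊆ U m := by
  rw [support_conj, ← zero_add (m : ℤ), ← image_pow_eq hshift]
  exact image_mono hg

lemma closure_support_conj_pow_subset (hshift : ∀ m, h '' U m = U (m + 1)) {g : X ≃ₜ X}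
    (hg : closure {x | g x ≠ x} ⊆ U 0) (m : ℕ) :
    closure {x | (h ^ m * g * (h ^ m)⁻¹) x ≠ x} ⊆ U m := by
  rw [support_conj, ← image_closure, ← zero_add (m : ℤ), ← image_pow_eq hshift]
  exact image_mono hg

theorem eq_commutator_of_eqOn_conj_pow (hshift : ∀ m, h '' U m = U (m + 1))
    (hdisj : Pairwise (Function.onFun Disjoint U)) {f g : X ≃ₜ X} (hg : {x | g x ≠ x} ⊆ U 0)
    (hf : ∀ m : ℕ, EqOn f (h ^ m * g * (h ^ m)⁻¹) (U m))
    (hfix : ∀ x ∉ ⋃ m : ℕ, U m, f x = x) :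
    g = f * h * f⁻¹ * h⁻¹ := by
  have hg_fix : ∀ x ∉ U 0, g x = x := fun x hx => by_contra fun hne => hx (hg hne)
  suffices hfh : ∀ y, f (h y) = g (h (f y)) by
    rw [show f * h = g * h * f from Homeomorph.ext hfh]
    group
  intro y
  by_cases hy : y ∈ ⋃ m : ℕ, U m
  · obtain ⟨m, hm⟩ := mem_iUnion.1 hy
    have hfy : f y ∈ U m := hf m hm ▸ mapsTo_of_support_subset
      (support_conj_pow_subset hshift hg m) hm
    have hhy : h y ∈ U (m + 1 : ℕ) := by rwa [Nat.cast_succ, apply_mem_succ_iff hshift]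
    have hhfy : h (f y) ∈ U (m + 1) := (apply_mem_succ_iff hshift).2 hfy
    have hU0 : h (f y) ∉ U 0 := disjoint_left.1 (hdisj (by omega)) hhfy
    rw [hf (m + 1) hhy, hg_fix _ hU0, hf m hm]
    simp [pow_succ', mul_inv_rev]
  · rw [hfix y hy]
    by_cases h0 : h y ∈ U 0
    · simpa using hf 0 h0
    rw [hg_fix _ h0]
    refine hfix _ fun hmem => ?_
    obtain ⟨_ | k, hk⟩ := mem_iUnion.1 hmem
    · exact h0 hk
    · rw [Nat.cast_succ, apply_mem_succ_iff hshift] at hk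
      exact hy (mem_iUnion.2 ⟨k, hk⟩)

end Shift

end Homeomorph

theorem shift_conjugation_commutator_general (n : ℕ) (h g : (Fin n → ℝ) ≃ₜ (Fin n → ℝ))
    (U : ℤ → Set (Fin n → ℝ))
    (hball : ∀ m : ℤ, ∃ c r, U m = Metric.ball c r)
    (hdisj : Pairwise (Function.onFun Disjoint U))
    (hshift : ∀ m : ℤ, h '' U m = U (m + 1))
    (x₀ : Fin n → ℝ)
    (hlim₀ : ∀ ε > 0, ∃ N : ℕ, ∀ m : ℕ, N ≤ m → U (m : ℤ) ⊆ Metric.ball x₀ ε)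
    (hg : closure {x | g x ≠ x} ⊆ U 0) :
    ∃ f : (Fin n → ℝ) ≃ₜ (Fin n → ℝ),
      (∀ m : ℕ, Set.EqOn (⇑f) (⇑(h ^ m * g * (h ^ m)⁻¹)) (U (m : ℤ))) ∧
      (∀ x, x ∉ (⋃ m : ℕ, U (m : ℤ)) → f x = x) ∧
      g = f * h * f⁻¹ * h⁻¹ := by
  have hopen (m : ℕ) : IsOpen (U m) := by
    obtain ⟨c, r, hcr⟩ := hball m
    exact hcr ▸ Metric.isOpen_ball
  have hsupp := Homeomorph.closure_support_conj_pow_subset hshift hg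
  have hsmall :
      ∀ ε > 0, ∀ᶠ m in Filter.cofinite, ∀ x, dist ((h ^ m * g * (h ^ m)⁻¹) x) x < ε := by
    intro ε hε
    obtain ⟨N, hN⟩ := hlim₀ (ε / 2) (half_pos hε)
    rw [Nat.cofinite_eq_atTop, Filter.eventually_atTop]
    exact ⟨N, fun m hm => Homeomorph.dist_apply_lt_of_support_subset_ball hε
      (subset_closure.trans ((hsupp m).trans (hN m hm)))⟩
  obtain ⟨f, hfU, hfix⟩ :=
    Homeomorph.exists_eqOn_pieces hopen (hdisj.comp_of_injective Nat.cast_injective) hsupp hsmall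
  exact ⟨f, hfU, hfix, Homeomorph.eq_commutator_of_eqOn_conj_pow hshift hdisj
    (subset_closure.trans hg) hfU hfix⟩

/-- Given a compactly supported shift `h` of a sequence of disjoint open balls whose
closures shrink to points at both ends, and `g` supported in `U 0`, the map equal to
`hᵐ g h⁻ᵐ` on `U m` for `m ≥ 0` and the identity elsewhere is a homeomorphism `f`
with `g = f h f⁻¹ h⁻¹`. -/
theorem shift_conjugation_commutator (n : ℕ) (h g : (Fin n → ℝ) ≃ₜ (Fin n → ℝ))
    (hh : IsCompact (closure {x | h x ≠ x}))
    (U : ℤ → Set (Fin n → ℝ))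
    (hball : ∀ m : ℤ, ∃ c r, U m = Metric.ball c r)
    (hdisj : Pairwise (Function.onFun Disjoint U))
    (hshift : ∀ m : ℤ, h '' U m = U (m + 1))
    (x₀ x₁ : Fin n → ℝ)
    (hlim₀ : ∀ ε > 0, ∃ N : ℕ, ∀ m : ℕ, N ≤ m → U (m : ℤ) ⊆ Metric.ball x₀ ε)
    (hlim₁ : ∀ ε > 0, ∃ N : ℕ, ∀ m : ℕ, N ≤ m → U (-(m : ℤ)) ⊆ Metric.ball x₁ ε)
    (hg : closure {x | g x ≠ x} ⊆ U 0) :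
    ∃ f : (Fin n → ℝ) ≃ₜ (Fin n → ℝ),
      (∀ m : ℕ, Set.EqOn (⇑f) (⇑(h ^ m * g * (h ^ m)⁻¹)) (U (m : ℤ))) ∧
      (∀ x, x ∉ (⋃ m : ℕ, U (m : ℤ)) → f x = x) ∧
      g = f * h * f⁻¹ * h⁻¹ :=
  shift_conjugation_commutator_general n h g U hball hdisj hshift x₀ hlim₀ hg
end
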